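/- arXiv:1405.2966 — 4 statements merged into one kernel-verified Lean document; each statement's English description precedes it below -/
import Mathlib

section
/- Let w ∈ S_n, let b = w^ℓ ⋯ w^1 ∈ W_w^ℓ be a decreasing factorization, and let 1 ≤ i < ℓ. If ẽ_i(b) ≠ 0, then ẽ_i(b) is again a decreasing factorization of w into ℓ factors, whose weight is obtained from wt(b) by increasing the i-th entry by 1 and decreasing the (i+1)-st entry by 1; similarly, if f̃_i(b) ≠ 0, then f̃_i(b) ∈ W_w^ℓ and its weight is obtained from wt(b) by decreasing the i-th entry by 1 and increasing the (i+1)-st entry by 1. -/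
open scoped Classical

noncomputable section

def sT (n i : ℕ) : Equiv.Perm (Fin n) :=
  if h : 1 ≤ i ∧ i < n then Equiv.swap ⟨i - 1, by omega⟩ ⟨i, h.2⟩ else 1

def wordProd (n : ℕ) (l : List ℕ) : Equiv.Perm (Fin n) :=
  (l.map (sT n)).prod

def len (n : ℕ) (w : Equiv.Perm (Fin n)) : ℕ :=
  sInf {k | ∃ l : List ℕ, (∀ i ∈ l, 1 ≤ i ∧ i < n) ∧ wordProd n l = w ∧ l.length = k}

def IsReducedWord (n : ℕ) (w : Equiv.Perm (Fin n)) (l : List ℕ) : Prop :=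
  (∀ i ∈ l, 1 ≤ i ∧ i < n) ∧ wordProd n l = w ∧ l.length = len n w

/-- The decreasing permutation with content `A`: product of the letters of `A`
in decreasing order. -/
def dperm (n : ℕ) (A : Finset ℕ) : Equiv.Perm (Fin n) :=
  wordProd n ((A.sort (· ≤ ·)).reverse)

/-- `c` encodes a decreasing factorization `w = wℓ ⋯ w¹` into `ℓ` decreasing factors,
where `c j` is the content of the factor `w^(j+1)` (0-indexed, so `c 0 = cont w¹`). -/
def IsDecFactorizationC (n ℓ : ℕ) (w : Equiv.Perm (Fin n)) (c : Fin ℓ → Finset ℕ) : Prop :=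
  (∀ j, ∀ a ∈ c j, 1 ≤ a ∧ a < n) ∧
    (List.ofFn fun j => dperm n (c j)).reverse.prod = w ∧
    len n w = ∑ j, (c j).card

/-- Pair the letters of the first list (the content of `w^(i+1)` in decreasing order)
with letters of the second finset (the content of `wⁱ`): each letter `b` is paired with
the smallest still unpaired `a > b`, if it exists.  Returns the pair
(unpaired letters of the first argument, unpaired letters of the second argument). -/
def pairAux : List ℕ → Finset ℕ → Finset ℕ × Finset ℕ
  | [], A => (∅, A)
  | b :: bs, A =>
    if h : (A.filter fun a => b < a).Nonempty then
      pairAux bs (A.erase ((A.filter fun a => b < a).min' h))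
    else
      ((pairAux bs A).1 ∪ {b}, (pairAux bs A).2)

/-- The unpaired letters of `cont w^(i+1)` (first argument `B`) in the
`w^(i+1) wⁱ`-pairing. -/
def Ldata (B A : Finset ℕ) : Finset ℕ :=
  (pairAux ((B.sort (· ≤ ·)).reverse) A).1

/-- The unpaired letters of `cont wⁱ` (second argument `A`) in the
`w^(i+1) wⁱ`-pairing. -/
def Rdata (B A : Finset ℕ) : Finset ℕ :=
  (pairAux ((B.sort (· ≤ ·)).reverse) A).2

/-- The raising crystal operator on a pair of contents `(B, A) = (cont w^(i+1), cont wⁱ)`. -/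
def eC (B A : Finset ℕ) : Option (Finset ℕ × Finset ℕ) :=
  if h : (Ldata B A).Nonempty then
    some (B.erase ((Ldata B A).min' h),
      insert ((Ldata B A).min' h - sInf {j | (Ldata B A).min' h - j - 1 ∉ B}) A)
  else none

/-- The lowering crystal operator on a pair of contents `(B, A) = (cont w^(i+1), cont wⁱ)`. -/
def fC (B A : Finset ℕ) : Option (Finset ℕ × Finset ℕ) :=
  if h : (Rdata B A).Nonempty then
    some (insert ((Rdata B A).max' h + sInf {j | (Rdata B A).max' h + j + 1 ∉ A}) B,
      A.erase ((Rdata B A).max' h))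
  else none

/-- The crystal raising operator `ẽᵢ` (1 ≤ i < ℓ) on decreasing factorizations encoded by
contents; it acts on the factors `w^(i+1) wⁱ`, i.e. on `c ⟨i⟩` and `c ⟨i-1⟩`. -/
def eOp {ℓ : ℕ} (i : ℕ) (c : Fin ℓ → Finset ℕ) : Option (Fin ℓ → Finset ℕ) :=
  if h : 1 ≤ i ∧ i < ℓ then
    match eC (c ⟨i, h.2⟩) (c ⟨i - 1, by omega⟩) with
    | none => none
    | some (B', A') =>
        some (Function.update (Function.update c ⟨i, h.2⟩ B') ⟨i - 1, by omega⟩ A')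
  else none

/-- The crystal lowering operator `f̃ᵢ` (1 ≤ i < ℓ) on decreasing factorizations encoded by
contents. -/
def fOp {ℓ : ℕ} (i : ℕ) (c : Fin ℓ → Finset ℕ) : Option (Fin ℓ → Finset ℕ) :=
  if h : 1 ≤ i ∧ i < ℓ then
    match fC (c ⟨i, h.2⟩) (c ⟨i - 1, by omega⟩) with
    | none => none
    | some (B', A') =>
        some (Function.update (Function.update c ⟨i, h.2⟩ B') ⟨i - 1, by omega⟩ A')
  else none

/-- `d`-fold iterate of `ẽᵢ`. -/
def eIter {ℓ : ℕ} (i : ℕ) : ℕ → (Fin ℓ → Finset ℕ) → Option (Fin ℓ → Finset ℕ)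
  | 0, c => some c
  | d + 1, c => (eOp i c).bind (eIter i d)

/-- `d`-fold iterate of `f̃ᵢ`. -/
def fIter {ℓ : ℕ} (i : ℕ) : ℕ → (Fin ℓ → Finset ℕ) → Option (Fin ℓ → Finset ℕ)
  | 0, c => some c
  | d + 1, c => (fOp i c).bind (fIter i d)

/-!
Only the factors `w^(i+1) wⁱ`, with contents `B` and `A`, change. For `ẽᵢ`, let `c = min L`
and `u = c - t`. By the choice of `t`, `[u, c] ⊆ B` and `u - 1 ∉ B`; since every letter of `B`
below `c` is paired, and no pair encloses the unpaired `c`, the letters of `B` in `[u, c)` are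
paired bijectively with `(u, c] ⊆ A`, and `c + 1 ∉ A`. For such runs the decreasing word of
`B` below `c`, followed by that of `A` above `u`, sends `u - 1, u` to `c - 1, c`, so it
conjugates `s_u` into `s_c`. Hence moving the letter `c` out of `B` and the letter `u` into `A`
keeps the product. If `u` were already in `A`, the same identity would cancel `s_u s_u` and
yield a factorization of `w` of length `ℓ(w) - 2`, which is impossible. The operator `f̃ᵢ`
is the mirror image, with the run `[a, a + s]` starting at `a = max R`.
-/

section DecreasingPermutation

variable {n : ℕ}

lemma wordProd_append (l₁ l₂ : List ℕ) :
    wordProd n (l₁ ++ l₂) = wordProd n l₁ * wordProd n l₂ := by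
  simp [wordProd]

lemma sT_mul_self (a : ℕ) : sT n a * sT n a = 1 := by
  unfold sT
  split_ifs <;> simp

lemma sT_eq_swap {a : ℕ} (h₁ : 1 ≤ a) (h₂ : a < n) :
    sT n a = Equiv.swap ⟨a - 1, (Nat.sub_le a 1).trans_lt h₂⟩ ⟨a, h₂⟩ :=
  dif_pos ⟨h₁, h₂⟩

lemma sT_apply_of_ne {a : ℕ} {x : Fin n} (h₁ : a ≠ x.1) (h₂ : a ≠ x.1 + 1) : sT n a x = x := by
  unfold sT
  split_ifs
  · exact Equiv.swap_apply_of_ne_of_ne (by grind) (by grind)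
  · rfl

lemma sT_apply_pred {a : ℕ} (h₁ : 1 ≤ a) (h₂ : a < n) :
    sT n a ⟨a - 1, (Nat.sub_le a 1).trans_lt h₂⟩ = ⟨a, h₂⟩ := by
  rw [sT_eq_swap h₁ h₂, Equiv.swap_apply_left]

lemma Finset.sort_insert_of_forall_lt {α : Type*} [LinearOrder α] {S : Finset α} {a : α}
    (h : ∀ x ∈ S, x < a) : (insert a S).sort (· ≤ ·) = S.sort (· ≤ ·) ++ [a] := by
  have hl := (List.toFinset_sort (· ≤ ·) (l := S.sort (· ≤ ·) ++ [a])
    (by simpa [List.nodup_append] using fun haS => (h a haS).false)).mpr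
    (by simpa [List.pairwise_append] using fun x hx => (h x hx).le)
  rwa [List.toFinset_append, Finset.sort_toFinset, List.toFinset_cons, List.toFinset_nil,
    insert_empty_eq, Finset.union_comm, ← Finset.insert_eq] at hl

lemma dperm_empty : dperm n ∅ = 1 := by
  simp [dperm, wordProd]

lemma dperm_insert {S : Finset ℕ} {a : ℕ} (h : ∀ x ∈ S, x < a) :
    dperm n (insert a S) = sT n a * dperm n S := by
  simp [dperm, Finset.sort_insert_of_forall_lt h, wordProd]

lemma dperm_union {S T : Finset ℕ} (h : ∀ a ∈ S, ∀ b ∈ T, b < a) :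
    dperm n (S ∪ T) = dperm n S * dperm n T := by
  induction S using Finset.induction_on_max with
  | empty => simp [dperm_empty]
  | insert a S ha ih =>
    rw [Finset.insert_union, dperm_insert, dperm_insert ha, ih, mul_assoc]
    · exact fun b hb => h b (Finset.mem_insert_of_mem hb)
    · simp only [Finset.mem_union]
      rintro x (hx | hx)
      exacts [ha x hx, h a (Finset.mem_insert_self _ _) x hx]

lemma dperm_apply_of_run {S : Finset ℕ} {x y : Fin n} (hxy : x ≤ y) (hx : x.1 ∉ S)
    (hrun : Finset.Ioc x.1 y.1 ⊆ S) (hy : y.1 + 1 ∉ S) : dperm n S x = y := by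
  induction S using Finset.induction_on_max generalizing y with
  | empty =>
    have : ¬ x < y := fun h => by simpa using hrun (Finset.right_mem_Ioc.2 h)
    rw [dperm_empty, Equiv.Perm.one_apply]
    exact le_antisymm hxy (not_lt.1 this)
  | insert a S ha ih =>
    simp only [Finset.mem_insert, not_or] at hx hy
    rw [dperm_insert ha, Equiv.Perm.mul_apply]
    by_cases hay : a = y.1
    · subst hay
      have hxy' : x.1 < y.1 := by have := Fin.le_def.1 hxy; omega
      rw [ih (y := ⟨y.1 - 1, by omega⟩) (Fin.le_def.2 (Nat.le_sub_one_of_lt hxy')) hx.2 ?_ ?_]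
      · exact sT_apply_pred (by omega) y.2
      · intro k hk
        have := hrun (Finset.Ioc_subset_Ioc_right (Nat.sub_le _ 1) hk)
        simp only [Finset.mem_Ioc] at hk
        grind
      · rw [Nat.sub_add_cancel (by omega)]
        exact fun h => (ha _ h).false
    · have hrun' : Finset.Ioc x.1 y.1 ⊆ S := fun k hk => by
        have hk' := Finset.mem_Ioc.1 hk
        have hyS := Finset.mem_insert.1 (hrun (Finset.right_mem_Ioc.2 (hk'.1.trans_le hk'.2)))
        rcases Finset.mem_insert.1 (hrun hk) with rfl | hkS
        · grind
        · exact hkS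
      rw [ih hxy hx.2 hrun' hy.2]
      exact sT_apply_of_ne hay (Ne.symm hy.1)

lemma dperm_apply_of_notMem {S : Finset ℕ} {x : Fin n} (hx : x.1 ∉ S) (hx' : x.1 + 1 ∉ S) :
    dperm n S x = x :=
  dperm_apply_of_run le_rfl hx (by simp) hx'

lemma dperm_mul_dperm_eq_erase_mul_sT {B A : Finset ℕ} {u c : ℕ} (hu : 1 ≤ u) (huc : u ≤ c)
    (hc : c < n) (hB : Finset.Icc u c ⊆ B) (hBu : u - 1 ∉ B) (hA : Finset.Ioc u c ⊆ A)
    (hAc : c + 1 ∉ A) (hAu : ∀ a ∈ A, u < a) :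
    dperm n B * dperm n A = dperm n (B.erase c) * dperm n A * sT n u := by
  set Bhi := B.filter (c < ·)
  set Blo := B.filter (· < c)
  have hB_eq : B = Bhi ∪ insert c Blo := by
    have := hB (Finset.right_mem_Icc.2 huc)
    ext k
    simp only [Finset.mem_union, Finset.mem_insert, Finset.mem_filter, Bhi, Blo]
    grind
  have hBc_eq : B.erase c = Bhi ∪ Blo := by
    ext k
    simp only [Finset.mem_union, Finset.mem_erase, Finset.mem_filter, Bhi, Blo]
    grind
  set X := dperm n Blo * dperm n A
  have hXu : X ⟨u - 1, by omega⟩ = ⟨c - 1, by omega⟩ := by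
    have hAfix : dperm n A ⟨u - 1, by omega⟩ = ⟨u - 1, by omega⟩ :=
      dperm_apply_of_notMem (fun h => by have := hAu _ h; simp only at this; omega)
        (fun h => by have := hAu _ h; simp only at this; omega)
    rw [Equiv.Perm.mul_apply, hAfix]
    refine dperm_apply_of_run (Fin.le_def.2 (Nat.sub_le_sub_right huc 1)) (by simp [Blo, hBu]) ?_ ?_
    · intro k hk
      simp only [Finset.mem_Ioc] at hk
      exact Finset.mem_filter.2 ⟨hB (Finset.mem_Icc.2 (by omega)), by omega⟩
    · simp only [Blo, Finset.mem_filter]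
      omega
  have hXc : X ⟨u, by omega⟩ = ⟨c, hc⟩ := by
    rw [Equiv.Perm.mul_apply, dperm_apply_of_run (y := ⟨c, hc⟩) (Fin.le_def.2 huc)
      (fun h => (hAu _ h).false) hA hAc]
    exact dperm_apply_of_notMem (by simp [Blo]) (by simp [Blo])
  -- conjugating `s_u = swap (u - 1) u` by `X` gives `swap (X (u - 1)) (X u) = s_c`
  have hconj : sT n c * X = X * sT n u := by
    have := Equiv.swap_apply_apply X ⟨u - 1, by omega⟩ ⟨u, by omega⟩
    rw [hXu, hXc] at this
    rw [sT_eq_swap (by omega) hc, sT_eq_swap hu (by omega), this]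
    group
  rw [hBc_eq, hB_eq, dperm_union, dperm_union, dperm_insert]
  · simp only [mul_assoc] at hconj ⊢
    rw [hconj]
    simp only [X, mul_assoc]
  all_goals
    simp only [Bhi, Blo, Finset.mem_filter, Finset.mem_insert]
    grind

lemma dperm_mul_dperm_eq_erase_insert {B A : Finset ℕ} {u c : ℕ} (hu : 1 ≤ u) (huc : u ≤ c)
    (hc : c < n) (hB : Finset.Icc u c ⊆ B) (hBu : u - 1 ∉ B) (hA : Finset.Ioc u c ⊆ A)
    (hAc : c + 1 ∉ A) (huA : u ∉ A) :
    dperm n B * dperm n A = dperm n (B.erase c) * dperm n (insert u A) := by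
  set Ahi := A.filter (u < ·)
  set Alo := A.filter (· < u)
  have hA_eq : A = Ahi ∪ Alo := by
    ext k
    simp only [Finset.mem_union, Finset.mem_filter, Ahi, Alo]
    grind
  have huA_eq : insert u A = Ahi ∪ insert u Alo := by
    ext k
    simp only [Finset.mem_union, Finset.mem_insert, Finset.mem_filter, Ahi, Alo]
    grind
  have hexch := dperm_mul_dperm_eq_erase_mul_sT (A := Ahi) hu huc hc hB hBu
    (fun k hk => Finset.mem_filter.2 ⟨hA hk, (Finset.mem_Ioc.1 hk).1⟩)
    (fun h => hAc (Finset.mem_of_mem_filter _ h)) (fun a ha => (Finset.mem_filter.1 ha).2)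
  rw [huA_eq, hA_eq, dperm_union, dperm_union, dperm_insert, ← mul_assoc, hexch,
    mul_assoc _ _ (dperm n Alo)]
  all_goals
    simp only [Ahi, Alo, Finset.mem_filter, Finset.mem_insert]
    grind

lemma dperm_mul_dperm_eq_erase_erase {B A : Finset ℕ} {u c : ℕ} (hu : 1 ≤ u) (huc : u ≤ c)
    (hc : c < n) (hB : Finset.Icc u c ⊆ B) (hBu : u - 1 ∉ B) (hA : Finset.Ioc u c ⊆ A)
    (hAc : c + 1 ∉ A) (huA : u ∈ A) :
    dperm n B * dperm n A = dperm n (B.erase c) * dperm n (A.erase u) := by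
  set Ahi := A.filter (u < ·)
  set Alo := A.filter (· < u)
  have hA_eq : A = Ahi ∪ insert u Alo := by
    ext k
    simp only [Finset.mem_union, Finset.mem_insert, Finset.mem_filter, Ahi, Alo]
    grind
  have huA_eq : A.erase u = Ahi ∪ Alo := by
    ext k
    simp only [Finset.mem_union, Finset.mem_erase, Finset.mem_filter, Ahi, Alo]
    grind
  have hexch := dperm_mul_dperm_eq_erase_mul_sT (A := Ahi) hu huc hc hB hBu
    (fun k hk => Finset.mem_filter.2 ⟨hA hk, (Finset.mem_Ioc.1 hk).1⟩)
    (fun h => hAc (Finset.mem_of_mem_filter _ h)) (fun a ha => (Finset.mem_filter.1 ha).2)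
  rw [huA_eq, hA_eq, dperm_union, dperm_union, dperm_insert, ← mul_assoc, hexch]
  · simp only [mul_assoc, ← mul_assoc (sT n u) (sT n u), sT_mul_self, one_mul]
  all_goals
    simp only [Ahi, Alo, Finset.mem_filter, Finset.mem_insert]
    grind

end DecreasingPermutation

lemma Finset.subset_image_of_card_le {α β : Type*} [DecidableEq β] {N : Finset α}
    {S T : Finset β} {f g : α → β} (hf : Set.InjOn f N) (hfT : N.image f ⊆ T)
    (hgS : S ⊆ N.image g) (hST : T.card ≤ S.card) : T ⊆ N.image f := by
  refine (Finset.eq_of_subset_of_card_le hfT ?_).symm.subset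
  calc T.card ≤ S.card := hST
    _ ≤ (N.image g).card := Finset.card_le_card hgS
    _ ≤ N.card := Finset.card_image_le
    _ = (N.image f).card := (Finset.card_image_of_injOn hf).symm

/-- Invariants of the pairing computed by `pairAux bs A = (L, R)`: `M` is the set of pairs
`(b, a)`, and `L`, `R` are the unpaired letters. The last three fields say that no pair encloses
an unpaired letter and that unpaired letters of `A` lie below unpaired letters of `bs`. -/
structure IsPairing (bs : List ℕ) (A L R : Finset ℕ) (M : Finset (ℕ × ℕ)) : Prop where
  fst_lt_snd : ∀ p ∈ M, p.1 < p.2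
  fst_inj : ∀ p ∈ M, ∀ q ∈ M, p.1 = q.1 → p = q
  snd_inj : ∀ p ∈ M, ∀ q ∈ M, p.2 = q.2 → p = q
  mem_list_iff : ∀ b, b ∈ bs ↔ b ∈ L ∨ ∃ p ∈ M, p.1 = b
  fst_ne_of_left : ∀ x ∈ L, ∀ p ∈ M, p.1 ≠ x
  mem_iff : ∀ a, a ∈ A ↔ a ∈ R ∨ ∃ p ∈ M, p.2 = a
  snd_ne_of_right : ∀ r ∈ R, ∀ p ∈ M, p.2 ≠ r
  snd_le_of_left : ∀ p ∈ M, ∀ x ∈ L, p.1 < x → p.2 ≤ x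
  snd_le_of_right : ∀ p ∈ M, ∀ r ∈ R, p.1 < r → p.2 ≤ r
  right_le_left : ∀ x ∈ L, ∀ r ∈ R, r ≤ x

namespace IsPairing

variable {bs : List ℕ} {A L R : Finset ℕ} {M : Finset (ℕ × ℕ)} {b : ℕ}

lemma fst_mem (hP : IsPairing bs A L R M) {p : ℕ × ℕ} (hp : p ∈ M) : p.1 ∈ bs :=
  (hP.mem_list_iff _).2 (Or.inr ⟨p, hp, rfl⟩)

lemma snd_mem (hP : IsPairing bs A L R M) {p : ℕ × ℕ} (hp : p ∈ M) : p.2 ∈ A :=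
  (hP.mem_iff _).2 (Or.inr ⟨p, hp, rfl⟩)

lemma left_mem (hP : IsPairing bs A L R M) {x : ℕ} (hx : x ∈ L) : x ∈ bs :=
  (hP.mem_list_iff _).2 (Or.inl hx)

lemma right_mem (hP : IsPairing bs A L R M) {x : ℕ} (hx : x ∈ R) : x ∈ A :=
  (hP.mem_iff _).2 (Or.inl hx)

lemma cons_paired {a : ℕ} (hP : IsPairing bs (A.erase a) L R M) (hbs : ∀ x ∈ bs, x < b)
    (haA : a ∈ A) (hba : b < a) (hmin : ∀ y ∈ A, b < y → a ≤ y) :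
    IsPairing (b :: bs) A L R (insert (b, a) M) where
  fst_lt_snd := by
    have := hP.fst_lt_snd
    simp only [Finset.mem_insert, forall_eq_or_imp]; exact ⟨hba, this⟩
  fst_inj := by
    have := hP.fst_inj; have := fun p (hp : p ∈ M) => hbs _ (hP.fst_mem hp)
    simp only [Finset.mem_insert, forall_eq_or_imp]
    grind
  snd_inj := by
    have := hP.snd_inj; have := fun p (hp : p ∈ M) => hP.snd_mem hp
    simp only [Finset.mem_insert, forall_eq_or_imp, Finset.mem_erase] at this ⊢
    grind
  mem_list_iff := by
    have := hP.mem_list_iff; have := fun p (hp : p ∈ M) => hbs _ (hP.fst_mem hp)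
    simp only [List.mem_cons, Finset.mem_insert, exists_eq_or_imp]
    grind
  fst_ne_of_left := by
    have := hP.fst_ne_of_left; have := fun x (hx : x ∈ L) => hbs _ (hP.left_mem hx)
    simp only [Finset.mem_insert, forall_eq_or_imp]
    grind
  mem_iff := by
    have := hP.mem_iff
    simp only [Finset.mem_erase, Finset.mem_insert, exists_eq_or_imp] at this ⊢
    grind
  snd_ne_of_right := by
    have := hP.snd_ne_of_right; have := fun x (hx : x ∈ R) => hP.right_mem hx
    simp only [Finset.mem_insert, forall_eq_or_imp, Finset.mem_erase] at this ⊢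
    grind
  snd_le_of_left := by
    have := hP.snd_le_of_left; have := fun x (hx : x ∈ L) => hbs _ (hP.left_mem hx)
    simp only [Finset.mem_insert, forall_eq_or_imp]
    grind
  snd_le_of_right := by
    have := hP.snd_le_of_right; have := fun x (hx : x ∈ R) => hP.right_mem hx
    simp only [Finset.mem_insert, forall_eq_or_imp, Finset.mem_erase] at this ⊢
    grind
  right_le_left := hP.right_le_left

lemma cons_unpaired (hP : IsPairing bs A L R M) (hbs : ∀ x ∈ bs, x < b) (hA : ∀ y ∈ A, y ≤ b) :
    IsPairing (b :: bs) A (L ∪ {b}) R M where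
  fst_lt_snd := hP.fst_lt_snd
  fst_inj := hP.fst_inj
  snd_inj := hP.snd_inj
  mem_list_iff := by
    have := hP.mem_list_iff
    simp only [List.mem_cons, Finset.mem_union, Finset.mem_singleton]
    grind
  fst_ne_of_left := by
    have := hP.fst_ne_of_left; have := fun p (hp : p ∈ M) => hbs _ (hP.fst_mem hp)
    simp only [Finset.mem_union, Finset.mem_singleton, or_imp, forall_and, forall_eq]
    grind
  mem_iff := hP.mem_iff
  snd_ne_of_right := hP.snd_ne_of_right
  snd_le_of_left := by
    have := hP.snd_le_of_left; have := fun p (hp : p ∈ M) => hA _ (hP.snd_mem hp)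
    simp only [Finset.mem_union, Finset.mem_singleton, or_imp, forall_and, forall_eq]
    grind
  snd_le_of_right := hP.snd_le_of_right
  right_le_left := by
    have := hP.right_le_left; have := fun x (hx : x ∈ R) => hA _ (hP.right_mem hx)
    simp only [Finset.mem_union, Finset.mem_singleton, or_imp, forall_and, forall_eq]
    grind

lemma succ_notMem_of_mem_left (hP : IsPairing bs A L R M) {x : ℕ} (hx : x ∈ L) : x + 1 ∉ A := by
  intro hxA
  rcases (hP.mem_iff _).1 hxA with hr | ⟨p, hp, hpx⟩
  · exact absurd (hP.right_le_left x hx _ hr) (by omega)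
  · have h₁ := hP.fst_lt_snd p hp
    have h₂ := hP.fst_ne_of_left x hx p hp
    have h₃ := hP.snd_le_of_left p hp x hx (by omega)
    omega

lemma notMem_of_succ_mem_right (hP : IsPairing bs A L R M) {x : ℕ} (hx : x + 1 ∈ R) : x ∉ bs := by
  intro hxbs
  rcases (hP.mem_list_iff _).1 hxbs with hl | ⟨p, hp, hpx⟩
  · exact absurd (hP.right_le_left x hl _ hx) (by omega)
  · have h₁ := hP.fst_lt_snd p hp
    have h₂ := hP.snd_ne_of_right _ hx p hp
    have h₃ := hP.snd_le_of_right p hp _ hx (by omega)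
    omega

lemma Ioc_subset_of_min_left (hP : IsPairing bs A L R M) {x u : ℕ} (hx : x ∈ L)
    (hmin : ∀ y ∈ L, x ≤ y) (hrun : ∀ k ∈ Finset.Ico u x, k ∈ bs) : Finset.Ioc u x ⊆ A := by
  set N := M.filter fun p => u ≤ p.1 ∧ p.1 < x
  have hsub : Finset.Ioc u x ⊆ N.image Prod.snd := by
    refine Finset.subset_image_of_card_le (S := Finset.Ico u x) (g := Prod.fst)
      (fun p hp q hq => hP.snd_inj p (Finset.mem_filter.1 hp).1 q (Finset.mem_filter.1 hq).1)
      ?_ ?_ (by simp)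
    · intro y hy
      obtain ⟨p, hp, rfl⟩ := Finset.mem_image.1 hy
      obtain ⟨hpM, hpu, hpx⟩ := Finset.mem_filter.1 hp
      have := hP.fst_lt_snd p hpM
      have := hP.snd_le_of_left p hpM x hx hpx
      exact Finset.mem_Ioc.2 ⟨by omega, by omega⟩
    · intro k hk
      rcases (hP.mem_list_iff k).1 (hrun k hk) with hl | ⟨p, hp, rfl⟩
      · exact absurd (hmin k hl) (by simp only [Finset.mem_Ico] at hk; omega)
      · exact Finset.mem_image.2 ⟨p, Finset.mem_filter.2 ⟨hp, by simpa using hk⟩, rfl⟩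
  intro k hk
  obtain ⟨p, hp, rfl⟩ := Finset.mem_image.1 (hsub hk)
  exact hP.snd_mem (Finset.mem_filter.1 hp).1

lemma Ico_subset_of_max_right (hP : IsPairing bs A L R M) {r v : ℕ} (hr : r ∈ R)
    (hmax : ∀ y ∈ R, y ≤ r) (hrun : Finset.Ioc r v ⊆ A) : ∀ k ∈ Finset.Ico r v, k ∈ bs := by
  set N := M.filter fun p => r < p.2 ∧ p.2 ≤ v
  have hsub : Finset.Ico r v ⊆ N.image Prod.fst := by
    refine Finset.subset_image_of_card_le (S := Finset.Ioc r v) (g := Prod.snd)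
      (fun p hp q hq => hP.fst_inj p (Finset.mem_filter.1 hp).1 q (Finset.mem_filter.1 hq).1)
      ?_ ?_ (by simp)
    · intro y hy
      obtain ⟨p, hp, rfl⟩ := Finset.mem_image.1 hy
      obtain ⟨hpM, hrp, hpv⟩ := Finset.mem_filter.1 hp
      have := hP.fst_lt_snd p hpM
      have : r ≤ p.1 := not_lt.1 fun h => by have := hP.snd_le_of_right p hpM r hr h; omega
      exact Finset.mem_Ico.2 ⟨by omega, by omega⟩
    · intro k hk
      rcases (hP.mem_iff k).1 (hrun hk) with hl | ⟨p, hp, rfl⟩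
      · exact absurd (hmax k hl) (by simp only [Finset.mem_Ioc] at hk; omega)
      · exact Finset.mem_image.2 ⟨p, Finset.mem_filter.2 ⟨hp, by simpa using hk⟩, rfl⟩
  intro k hk
  obtain ⟨p, hp, rfl⟩ := Finset.mem_image.1 (hsub hk)
  exact hP.fst_mem (Finset.mem_filter.1 hp).1

end IsPairing

lemma exists_isPairing :
    ∀ (bs : List ℕ) (A : Finset ℕ), bs.Pairwise (· > ·) →
      ∃ M, IsPairing bs A (pairAux bs A).1 (pairAux bs A).2 M
  | [], A, _ => ⟨∅, by constructor <;> simp [pairAux]⟩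
  | b :: bs, A, h => by
    rw [List.pairwise_cons] at h
    rw [pairAux]
    split_ifs with hne
    · obtain ⟨haA, hba⟩ := Finset.mem_filter.1 (Finset.min'_mem _ hne)
      obtain ⟨M, hM⟩ := exists_isPairing bs (A.erase _) h.2
      exact ⟨_, hM.cons_paired h.1 haA hba
        fun y hy hby => Finset.min'_le _ _ (Finset.mem_filter.2 ⟨hy, hby⟩)⟩
    · obtain ⟨M, hM⟩ := exists_isPairing bs A h.2
      exact ⟨M, hM.cons_unpaired h.1 fun y hy => not_lt.1 fun hby => hne ⟨y, by simp [hy, hby]⟩⟩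

lemma exists_isPairing_Ldata_Rdata (B A : Finset ℕ) :
    ∃ M, IsPairing (B.sort (· ≤ ·)).reverse A (Ldata B A) (Rdata B A) M :=
  exists_isPairing _ A (List.pairwise_reverse.2 (Finset.sortedLT_sort B).pairwise)

def IsContent (n : ℕ) (S : Finset ℕ) : Prop := ∀ a ∈ S, 1 ≤ a ∧ a < n

def IsReducedPair (n : ℕ) (B A : Finset ℕ) : Prop :=
  ∀ B' A', IsContent n B' → IsContent n A' → dperm n B' * dperm n A' = dperm n B * dperm n A →
    B.card + A.card ≤ B'.card + A'.card

lemma sInf_run_below {B : Finset ℕ} {c t : ℕ} (h0 : 0 ∉ B) (hc : c ∈ B)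
    (ht : sInf {j | c - j - 1 ∉ B} = t) :
    1 ≤ c - t ∧ Finset.Icc (c - t) c ⊆ B ∧ c - t - 1 ∉ B := by
  have hc0 : c ≠ 0 := by rintro rfl; exact h0 hc
  have hle : ∀ j, c - j - 1 ∉ B → t ≤ j := fun j hj => ht ▸ Nat.sInf_le hj
  have hmem : c - t - 1 ∉ B := ht ▸ Nat.sInf_mem (s := {j | c - j - 1 ∉ B}) ⟨c, by simpa using h0⟩
  refine ⟨?_, fun k hk => ?_, hmem⟩
  · have := hle (c - 1) (by rwa [show c - (c - 1) - 1 = 0 by omega])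
    omega
  · rw [Finset.mem_Icc] at hk
    by_contra hkB
    rcases Nat.eq_or_lt_of_le hk.2 with rfl | hkc
    · exact hkB hc
    · have := hle (c - k - 1) (by rwa [show c - (c - k - 1) - 1 = k by omega])
      omega

lemma sInf_run_above {A : Finset ℕ} {a s : ℕ} (ha : a ∈ A) (hs : sInf {j | a + j + 1 ∉ A} = s) :
    Finset.Icc a (a + s) ⊆ A ∧ a + s + 1 ∉ A := by
  have hbdd : {j | a + j + 1 ∉ A}.Nonempty :=
    ⟨A.sup id, fun h => by have := Finset.le_sup (f := id) h; simp only [id] at this; omega⟩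
  have hle : ∀ j, a + j + 1 ∉ A → s ≤ j := fun j hj => hs ▸ Nat.sInf_le hj
  refine ⟨fun k hk => ?_, hs ▸ Nat.sInf_mem hbdd⟩
  rw [Finset.mem_Icc] at hk
  by_contra hkA
  rcases Nat.eq_or_lt_of_le hk.1 with rfl | hak
  · exact hkA ha
  · have := hle (k - a - 1) (by rwa [show a + (k - a - 1) + 1 = k by omega])
    omega

section LocalOperators

variable {n : ℕ} {B A B' A' : Finset ℕ}

lemma eC_spec (hB : IsContent n B) (hA : IsContent n A) (hred : IsReducedPair n B A)
    (h : eC B A = some (B', A')) :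
    IsContent n B' ∧ IsContent n A' ∧ dperm n B' * dperm n A' = dperm n B * dperm n A ∧
      B'.card + 1 = B.card ∧ A'.card = A.card + 1 := by
  rw [eC] at h
  split_ifs at h with hL
  obtain ⟨rfl, rfl⟩ := Prod.mk.inj (Option.some.inj h).symm
  obtain ⟨M, hP⟩ := exists_isPairing_Ldata_Rdata B A
  set c := (Ldata B A).min' hL
  set u := c - sInf {j | c - j - 1 ∉ B}
  have hcL : c ∈ Ldata B A := Finset.min'_mem _ hL
  have hcB : c ∈ B := by simpa using hP.left_mem hcL
  have hcn : c < n := (hB c hcB).2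
  obtain ⟨hu, hBrun, hBu⟩ := sInf_run_below (fun h0 => by simpa using hB 0 h0) hcB rfl
  have huc : u ≤ c := Nat.sub_le _ _
  have hAc : c + 1 ∉ A := hP.succ_notMem_of_mem_left hcL
  have hArun : Finset.Ioc u c ⊆ A := hP.Ioc_subset_of_min_left hcL
    (fun y hy => Finset.min'_le _ _ hy)
    (fun k hk => by simpa using hBrun (Finset.Ico_subset_Icc_self hk))
  have hB' : IsContent n (B.erase c) := fun a ha => hB a (Finset.mem_of_mem_erase ha)
  by_cases huA : u ∈ A
  · have hshort := hred _ _ hB' (fun a ha => hA a (Finset.mem_of_mem_erase ha))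
      (dperm_mul_dperm_eq_erase_erase hu huc hcn hBrun hBu hArun hAc huA).symm
    rw [Finset.card_erase_of_mem hcB, Finset.card_erase_of_mem huA] at hshort
    have := Finset.card_pos.2 ⟨c, hcB⟩
    have := Finset.card_pos.2 ⟨u, huA⟩
    omega
  · refine ⟨hB', ?_, (dperm_mul_dperm_eq_erase_insert hu huc hcn hBrun hBu hArun hAc huA).symm,
      Finset.card_erase_add_one hcB, Finset.card_insert_of_notMem huA⟩
    intro a ha
    rcases Finset.mem_insert.1 ha with rfl | ha
    · exact ⟨hu, by omega⟩
    · exact hA a ha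

lemma fC_spec (hB : IsContent n B) (hA : IsContent n A) (hred : IsReducedPair n B A)
    (h : fC B A = some (B', A')) :
    IsContent n B' ∧ IsContent n A' ∧ dperm n B' * dperm n A' = dperm n B * dperm n A ∧
      B'.card = B.card + 1 ∧ A'.card + 1 = A.card := by
  rw [fC] at h
  split_ifs at h with hR
  obtain ⟨rfl, rfl⟩ := Prod.mk.inj (Option.some.inj h).symm
  obtain ⟨M, hP⟩ := exists_isPairing_Ldata_Rdata B A
  set a := (Rdata B A).max' hR
  set c := a + sInf {j | a + j + 1 ∉ A}
  have haR : a ∈ Rdata B A := Finset.max'_mem _ hR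
  have haA : a ∈ A := hP.right_mem haR
  have ha : 1 ≤ a := (hA a haA).1
  obtain ⟨hArun, hAc⟩ := sInf_run_above haA rfl
  have hac : a ≤ c := Nat.le_add_right _ _
  have hcn : c < n := (hA c (hArun (Finset.right_mem_Icc.2 hac))).2
  have hBa : a - 1 ∉ B := by
    simpa using hP.notMem_of_succ_mem_right (x := a - 1) (by rwa [Nat.sub_add_cancel ha])
  have hBrun : Finset.Ico a c ⊆ B := fun k hk => by
    simpa using hP.Ico_subset_of_max_right haR (fun y hy => Finset.le_max' _ _ hy)
      ((Finset.Ioc_subset_Icc_self).trans hArun) k hk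
  have hA' : IsContent n (A.erase a) := fun x hx => hA x (Finset.mem_of_mem_erase hx)
  have hBrun' : Finset.Icc a c ⊆ insert c B := by
    rw [← Finset.Ico_insert_right hac]
    exact Finset.insert_subset_insert c hBrun
  by_cases hcB : c ∈ B
  · rw [Finset.insert_eq_of_mem hcB] at hBrun'
    have hshort := hred _ _ (fun x hx => hB x (Finset.mem_of_mem_erase hx)) hA'
      (dperm_mul_dperm_eq_erase_erase ha hac hcn hBrun' hBa
        ((Finset.Ioc_subset_Icc_self).trans hArun) hAc haA).symm
    rw [Finset.card_erase_of_mem hcB, Finset.card_erase_of_mem haA] at hshort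
    have := Finset.card_pos.2 ⟨c, hcB⟩
    have := Finset.card_pos.2 ⟨a, haA⟩
    omega
  · have hexch := dperm_mul_dperm_eq_erase_insert (B := insert c B) (A := A.erase a) ha hac hcn
      hBrun' (by rw [Finset.mem_insert, not_or]; exact ⟨by omega, hBa⟩) ?_
      (fun h => hAc (Finset.mem_of_mem_erase h)) (Finset.notMem_erase a A)
    · rw [Finset.erase_insert hcB, Finset.insert_erase haA] at hexch
      refine ⟨?_, hA', hexch, Finset.card_insert_of_notMem hcB, Finset.card_erase_add_one haA⟩
      intro x hx
      rcases Finset.mem_insert.1 hx with rfl | hx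
      · exact ⟨by omega, hcn⟩
      · exact hB x hx
    · intro k hk
      exact Finset.mem_erase.2 ⟨(Finset.mem_Ioc.1 hk).1.ne', hArun (Finset.Ioc_subset_Icc_self hk)⟩

end LocalOperators

lemma List.prod_reverse_set_set {G : Type*} [Monoid G] :
    ∀ (l : List G) (k : ℕ) (hk : k + 1 < l.length) (x y : G), x * y = l[k + 1] * l[k] →
      ((l.set (k + 1) x).set k y).reverse.prod = l.reverse.prod
  | a :: b :: l, 0, _, x, y, h => by simp_all
  | a :: l, k + 1, hk, x, y, h => by
    simp only [List.set_cons_succ, List.reverse_cons, List.prod_append]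
    rw [List.prod_reverse_set_set l k (by simpa using hk) x y (by simpa using h)]

lemma List.ofFn_update {α : Type*} {ℓ : ℕ} (f : Fin ℓ → α) (i : Fin ℓ) (x : α) :
    List.ofFn (Function.update f i x) = (List.ofFn f).set i x := by
  refine List.ext_getElem (by simp) fun k h₁ h₂ => ?_
  simp [List.getElem_set, Function.update_apply, Fin.ext_iff, eq_comm]

lemma List.prod_reverse_ofFn_update_update {G : Type*} [Monoid G] {ℓ : ℕ} (f : Fin ℓ → G)
    {I J : Fin ℓ} (hIJ : J.1 + 1 = I.1) {x y : G} (h : x * y = f I * f J) :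
    (List.ofFn (Function.update (Function.update f I x) J y)).reverse.prod =
      (List.ofFn f).reverse.prod := by
  rw [List.ofFn_update, List.ofFn_update]
  have := List.prod_reverse_set_set (List.ofFn f) J (by simp only [List.length_ofFn]; omega) x y
    (by simp [hIJ, h])
  rwa [hIJ] at this

lemma Fintype.sum_update_update_add {ι M : Type*} [Fintype ι] [DecidableEq ι] [AddCommMonoid M]
    (f : ι → M) {I J : ι} (hIJ : I ≠ J) (x y : M) :
    ∑ j, Function.update (Function.update f I x) J y j + (f I + f J) = ∑ j, f j + (x + y) := by
  have hsplit : ∀ g : ι → M, ∑ j, g j = g I + g J + ∑ j ∈ (Finset.univ.erase I).erase J, g j :=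
    fun g => by
      rw [add_assoc, Finset.add_sum_erase _ _ (Finset.mem_erase.2 ⟨hIJ.symm, Finset.mem_univ _⟩),
        Finset.add_sum_erase _ _ (Finset.mem_univ _)]
  rw [hsplit, hsplit f, Finset.sum_congr rfl fun j hj => ?_]
  · simp only [Function.update_self, Function.update_of_ne hIJ]
    abel
  · obtain ⟨hjJ, hjI, -⟩ := Finset.mem_erase.1 hj |>.imp_right Finset.mem_erase.1
    rw [Function.update_of_ne hjJ, Function.update_of_ne hjI]

section Length

variable {n : ℕ}

lemma len_le_length {w : Equiv.Perm (Fin n)} {l : List ℕ} (hl : ∀ i ∈ l, 1 ≤ i ∧ i < n)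
    (hw : wordProd n l = w) : len n w ≤ l.length :=
  Nat.sInf_le ⟨l, hl, hw, rfl⟩

lemma wordProd_flatten (L : List (List ℕ)) : wordProd n L.flatten = (L.map (wordProd n)).prod := by
  induction L with
  | nil => rfl
  | cons l L ih => rw [List.flatten_cons, wordProd_append, List.map_cons, List.prod_cons, ih]

lemma len_prod_dperm_le {ℓ : ℕ} (d : Fin ℓ → Finset ℕ) (hd : ∀ j, IsContent n (d j)) :
    len n (List.ofFn fun j => dperm n (d j)).reverse.prod ≤ ∑ j, (d j).card := by
  have hlen := len_le_length (w := (List.ofFn fun j => dperm n (d j)).reverse.prod)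
    (l := (List.ofFn fun j => ((d j).sort (· ≤ ·)).reverse).reverse.flatten) ?_ ?_
  · simpa [List.sum_ofFn] using hlen
  · simp only [List.mem_flatten, List.mem_reverse, List.mem_ofFn]
    rintro a ⟨_, ⟨j, rfl⟩, ha⟩
    exact hd j a (by simpa using ha)
  · rw [wordProd_flatten, List.map_reverse, List.map_ofFn]
    rfl

end Length

namespace IsDecFactorizationC

variable {n ℓ : ℕ} {w : Equiv.Perm (Fin n)} {c : Fin ℓ → Finset ℕ} {I J : Fin ℓ} {B' A' : Finset ℕ}

lemma update_update_spec (hc : IsDecFactorizationC n ℓ w c) (hIJ : J.1 + 1 = I.1)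
    (hB' : IsContent n B') (hA' : IsContent n A')
    (hprod : dperm n B' * dperm n A' = dperm n (c I) * dperm n (c J)) :
    (∀ j, IsContent n (Function.update (Function.update c I B') J A' j)) ∧
      (List.ofFn fun j => dperm n (Function.update (Function.update c I B') J A' j)).reverse.prod
        = w ∧
      ∑ j, (Function.update (Function.update c I B') J A' j).card + ((c I).card + (c J).card) =
        ∑ j, (c j).card + (B'.card + A'.card) := by
  have hIJ' : I ≠ J := fun h => by rw [h] at hIJ; omega
  refine ⟨fun j => ?_, ?_, ?_⟩
  · simp only [Function.update_apply]
    split_ifs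
    exacts [hA', hB', hc.1 j]
  · have := List.prod_reverse_ofFn_update_update (dperm n ∘ c) hIJ hprod
    rw [← Function.comp_update, ← Function.comp_update] at this
    exact this.trans hc.2.1
  · have := Fintype.sum_update_update_add (Finset.card ∘ c) hIJ' B'.card A'.card
    rwa [← Function.comp_update, ← Function.comp_update] at this

lemma update_update (hc : IsDecFactorizationC n ℓ w c) (hIJ : J.1 + 1 = I.1)
    (hB' : IsContent n B') (hA' : IsContent n A')
    (hprod : dperm n B' * dperm n A' = dperm n (c I) * dperm n (c J))
    (hcard : B'.card + A'.card = (c I).card + (c J).card) :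
    IsDecFactorizationC n ℓ w (Function.update (Function.update c I B') J A') := by
  obtain ⟨hcont, hw, hsum⟩ := hc.update_update_spec hIJ hB' hA' hprod
  exact ⟨hcont, hw, by have := hc.2.2; omega⟩

lemma isReducedPair (hc : IsDecFactorizationC n ℓ w c) (hIJ : J.1 + 1 = I.1) :
    IsReducedPair n (c I) (c J) := by
  intro B' A' hB' hA' hprod
  obtain ⟨hcont, hw, hsum⟩ := hc.update_update_spec hIJ hB' hA' hprod
  have := len_prod_dperm_le _ hcont
  rw [hw] at this
  have := hc.2.2
  omega

end IsDecFactorizationC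

lemma eOp_eq_some {ℓ i : ℕ} {c c' : Fin ℓ → Finset ℕ} (hi : 1 ≤ i) (hiℓ : i < ℓ)
    (h : eOp i c = some c') :
    ∃ B' A', eC (c ⟨i, hiℓ⟩) (c ⟨i - 1, (Nat.sub_le i 1).trans_lt hiℓ⟩) = some (B', A') ∧
      c' = Function.update (Function.update c ⟨i, hiℓ⟩ B')
        ⟨i - 1, (Nat.sub_le i 1).trans_lt hiℓ⟩ A' := by
  rw [eOp, dif_pos ⟨hi, hiℓ⟩] at h
  split at h
  · cases h
  · exact ⟨_, _, ‹_›, (Option.some.inj h).symm⟩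

lemma fOp_eq_some {ℓ i : ℕ} {c c' : Fin ℓ → Finset ℕ} (hi : 1 ≤ i) (hiℓ : i < ℓ)
    (h : fOp i c = some c') :
    ∃ B' A', fC (c ⟨i, hiℓ⟩) (c ⟨i - 1, (Nat.sub_le i 1).trans_lt hiℓ⟩) = some (B', A') ∧
      c' = Function.update (Function.update c ⟨i, hiℓ⟩ B')
        ⟨i - 1, (Nat.sub_le i 1).trans_lt hiℓ⟩ A' := by
  rw [fOp, dif_pos ⟨hi, hiℓ⟩] at h
  split at h
  · cases h
  · exact ⟨_, _, ‹_›, (Option.some.inj h).symm⟩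

/-- If `ẽᵢ(b) ≠ 0` then `ẽᵢ(b)` is again a decreasing factorization of `w` into `ℓ` factors,
whose weight (the tuple of factor lengths `(ℓ(w¹),…,ℓ(wℓ))`, here `j ↦ (c j).card`) is
obtained by increasing the `i`-th entry by one and decreasing the `(i+1)`-st entry by one;
similarly for `f̃ᵢ` with the roles of the entries interchanged. -/
theorem crystal_ops_preserve (n ℓ : ℕ) (w : Equiv.Perm (Fin n)) (c : Fin ℓ → Finset ℕ)
    (i : ℕ) (hi : 1 ≤ i) (hiℓ : i < ℓ) (hc : IsDecFactorizationC n ℓ w c) :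
    (∀ c', eOp i c = some c' →
      IsDecFactorizationC n ℓ w c' ∧
      (c' ⟨i - 1, by omega⟩).card = (c ⟨i - 1, by omega⟩).card + 1 ∧
      (c' ⟨i, hiℓ⟩).card + 1 = (c ⟨i, hiℓ⟩).card ∧
      ∀ j : Fin ℓ, j.1 ≠ i → j.1 ≠ i - 1 → (c' j).card = (c j).card) ∧
    (∀ c', fOp i c = some c' →
      IsDecFactorizationC n ℓ w c' ∧
      (c' ⟨i, hiℓ⟩).card = (c ⟨i, hiℓ⟩).card + 1 ∧
      (c' ⟨i - 1, by omega⟩).card + 1 = (c ⟨i - 1, by omega⟩).card ∧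
      ∀ j : Fin ℓ, j.1 ≠ i → j.1 ≠ i - 1 → (c' j).card = (c j).card) := by
  have hIJ : (⟨i - 1, by omega⟩ : Fin ℓ).1 + 1 = (⟨i, hiℓ⟩ : Fin ℓ).1 := Nat.sub_add_cancel hi
  have hne : (⟨i, hiℓ⟩ : Fin ℓ) ≠ ⟨i - 1, by omega⟩ := Fin.ne_of_val_ne (by omega)
  have hred := hc.isReducedPair hIJ
  have hother : ∀ B' A' (j : Fin ℓ), j.1 ≠ i → j.1 ≠ i - 1 →
      (Function.update (Function.update c ⟨i, hiℓ⟩ B') ⟨i - 1, by omega⟩ A' j).card =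
        (c j).card := fun B' A' j h₁ h₂ => by
    rw [Function.update_of_ne (Fin.ne_of_val_ne h₂), Function.update_of_ne (Fin.ne_of_val_ne h₁)]
  constructor
  · rintro c' hc'
    obtain ⟨B', A', hC, rfl⟩ := eOp_eq_some hi hiℓ hc'
    obtain ⟨hB', hA', hprod, hcardB, hcardA⟩ := eC_spec (hc.1 _) (hc.1 _) hred hC
    refine ⟨hc.update_update hIJ hB' hA' hprod (by omega), ?_, ?_, hother B' A'⟩
    · rwa [Function.update_self]
    · rwa [Function.update_of_ne hne, Function.update_self]
  · rintro c' hc'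
    obtain ⟨B', A', hC, rfl⟩ := fOp_eq_some hi hiℓ hc'
    obtain ⟨hB', hA', hprod, hcardB, hcardA⟩ := fC_spec (hc.1 _) (hc.1 _) hred hC
    refine ⟨hc.update_update hIJ hB' hA' hprod (by omega), ?_, ?_, hother B' A'⟩
    · rwa [Function.update_of_ne hne, Function.update_self]
    · rwa [Function.update_self]

end
end

section
/- Let w ∈ S_n, let b, b' ∈ W_w^ℓ, and let 1 ≤ i < ℓ. Then ẽ_i(b) = b' if and only if f̃_i(b') = b. -/
open scoped Classical

noncomputable section

/-!
The pairing is a bracket matching: the letters of `B = cont w^{i+1}` open, those of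
`A = cont wⁱ` close, and `b ∈ B` is matched with the nearest free `a > b`; every unmatched
letter of `A` lies below every unmatched letter of `B`. Let `c` be the leftmost unmatched letter
of `B` and `[c - t, c]` the run of `B` ending at `c`. When `c` is reached nothing above `c` is
left in `A`, the run `c - 1, …, c - t` is matched with `c, …, c - t + 1`, and all letters of `B`
below `c - t` find partners. Removing `c` from `B` and adding `c - t` to `A` shifts the matching
of the run down by one and makes `c - t` the rightmost unmatched letter of `A`, followed in `A` by
the run `c - t + 1, …, c` and the gap `c + 1`; so `f̃ᵢ` undoes the move. The converse is the
mirror image, with a counting step: the letters of `A` in `(a, a + s]` are all matched, and their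
partners fill `[a, a + s)` in `B`.

Reducedness, in the form `ℓ(w) = ∑ⱼ |cont wʲ|`, forces `c - t ∉ A` (resp. `a + s ∉ B`):
otherwise the move would lose a letter.
-/

open Finset

lemma sort_insert_reverse {α : Type*} [LinearOrder α] {B : Finset α} {b : α}
    (hb : ∀ x ∈ B, x < b) :
    ((insert b B).sort (· ≤ ·)).reverse = b :: (B.sort (· ≤ ·)).reverse := by
  rw [List.reverse_eq_cons_iff, List.reverse_reverse]
  have hbB : b ∉ B := fun h => lt_irrefl b (hb b h)
  refine List.Perm.eq_of_pairwise' (pairwise_sort _ _) ?_ ?_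
  · simpa [List.pairwise_append] using fun x hx => (hb x hx).le
  · refine List.perm_of_nodup_nodup_toFinset_eq (sort_nodup _ _) ?_ (by ext; simp)
    simpa [List.nodup_append, sort_nodup] using hbB

lemma Ldata_empty (A : Finset ℕ) : Ldata ∅ A = ∅ := by simp [Ldata, pairAux]

lemma Rdata_empty (A : Finset ℕ) : Rdata ∅ A = A := by simp [Rdata, pairAux]

lemma Ldata_Rdata_insert_of_partner {B A : Finset ℕ} {b m : ℕ} (hb : ∀ x ∈ B, x < b)
    (hm : m ∈ A) (hbm : b < m) (hmin : ∀ a ∈ A, b < a → m ≤ a) :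
    Ldata (insert b B) A = Ldata B (A.erase m) ∧ Rdata (insert b B) A = Rdata B (A.erase m) := by
  have hne : (A.filter (b < ·)).Nonempty := ⟨m, mem_filter.2 ⟨hm, hbm⟩⟩
  have hpartner : (A.filter (b < ·)).min' hne = m :=
    le_antisymm (min'_le _ _ (mem_filter.2 ⟨hm, hbm⟩))
      (le_min' _ _ _ fun a ha => hmin a (mem_filter.1 ha).1 (mem_filter.1 ha).2)
  simp only [Ldata, Rdata, sort_insert_reverse hb, pairAux, dif_pos hne, hpartner, and_self]

lemma Ldata_Rdata_insert_of_forall_le {B A : Finset ℕ} {b : ℕ} (hb : ∀ x ∈ B, x < b)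
    (hA : ∀ a ∈ A, a ≤ b) :
    Ldata (insert b B) A = insert b (Ldata B A) ∧ Rdata (insert b B) A = Rdata B A := by
  have hne : ¬(A.filter (b < ·)).Nonempty := fun ⟨a, ha⟩ =>
    (mem_filter.1 ha).2.not_ge (hA a (mem_filter.1 ha).1)
  simp only [Ldata, Rdata, sort_insert_reverse hb, pairAux, dif_neg hne, union_singleton,
    and_self]

lemma Ldata_Rdata_insert_cases {B A : Finset ℕ} {b : ℕ} (hb : ∀ x ∈ B, x < b) :
    (∃ m ∈ A, b < m ∧ (∀ a ∈ A, b < a → m ≤ a) ∧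
      Ldata (insert b B) A = Ldata B (A.erase m) ∧ Rdata (insert b B) A = Rdata B (A.erase m)) ∨
    ((∀ a ∈ A, a ≤ b) ∧
      Ldata (insert b B) A = insert b (Ldata B A) ∧ Rdata (insert b B) A = Rdata B A) := by
  by_cases hne : (A.filter (b < ·)).Nonempty
  · set m := (A.filter (b < ·)).min' hne
    have hm := mem_filter.1 (min'_mem _ hne)
    have hmin : ∀ a ∈ A, b < a → m ≤ a := fun a ha hba => min'_le _ _ (mem_filter.2 ⟨ha, hba⟩)
    exact Or.inl ⟨m, hm.1, hm.2, hmin, Ldata_Rdata_insert_of_partner hb hm.1 hm.2 hmin⟩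
  · have hA : ∀ a ∈ A, a ≤ b := fun a ha => not_lt.1 fun hba => hne ⟨a, mem_filter.2 ⟨ha, hba⟩⟩
    exact Or.inr ⟨hA, Ldata_Rdata_insert_of_forall_le hb hA⟩

lemma Rdata_subset (B A : Finset ℕ) : Rdata B A ⊆ A := by
  induction B using Finset.induction_on_max generalizing A with
  | empty => rw [Rdata_empty]
  | insert b B hb ih =>
    rcases Ldata_Rdata_insert_cases (A := A) hb with ⟨m, -, -, -, -, hR⟩ | ⟨-, -, hR⟩
    · exact hR ▸ (ih _).trans (erase_subset _ _)
    · exact hR ▸ ih A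

lemma Ldata_subset (B A : Finset ℕ) : Ldata B A ⊆ B := by
  induction B using Finset.induction_on_max generalizing A with
  | empty => rw [Ldata_empty]
  | insert b B hb ih =>
    rcases Ldata_Rdata_insert_cases (A := A) hb with ⟨m, -, -, -, hL, -⟩ | ⟨-, hL, -⟩
    · exact hL ▸ (ih _).trans (subset_insert _ _)
    · exact hL ▸ insert_subset_insert _ (ih A)

lemma Ldata_Rdata_union {s t : Finset ℕ} {y : ℕ} (hs : ∀ b ∈ s, y ≤ b) (ht : ∀ b ∈ t, b < y)
    (A : Finset ℕ) :
    Ldata (s ∪ t) A = Ldata s A ∪ Ldata t (Rdata s A) ∧ Rdata (s ∪ t) A = Rdata t (Rdata s A) := by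
  induction s using Finset.induction_on_max generalizing A with
  | empty => simp [Ldata_empty, Rdata_empty]
  | insert b s hb ih =>
    have ih := ih (fun x hx => hs x (mem_insert_of_mem hx))
    have hbst : ∀ x ∈ s ∪ t, x < b := by
      simp only [mem_union]
      rintro x (hx | hx)
      exacts [hb x hx, (ht x hx).trans_le (hs b (mem_insert_self _ _))]
    rw [insert_union]
    rcases Ldata_Rdata_insert_cases (A := A) hbst with
      ⟨m, hm, hbm, hmin, hL, hR⟩ | ⟨hA, hL, hR⟩
    · obtain ⟨hL', hR'⟩ := Ldata_Rdata_insert_of_partner hb hm hbm hmin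
      rw [hL, hR, hL', hR']
      exact ih _
    · obtain ⟨hL', hR'⟩ := Ldata_Rdata_insert_of_forall_le hb hA
      rw [hL, hR, hL', hR', (ih A).1, (ih A).2, insert_union]
      exact ⟨rfl, rfl⟩

lemma mem_Rdata_of_forall_le {B A : Finset ℕ} {x : ℕ} (hB : ∀ b ∈ B, x ≤ b) (hx : x ∈ A) :
    x ∈ Rdata B A := by
  induction B using Finset.induction_on_max generalizing A with
  | empty => rwa [Rdata_empty]
  | insert b B hb ih =>
    have hxb := hB b (mem_insert_self _ _)
    have hB := fun b' hb' => hB b' (mem_insert_of_mem hb')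
    rcases Ldata_Rdata_insert_cases (A := A) hb with ⟨m, -, hbm, -, -, hR⟩ | ⟨-, -, hR⟩
    · exact hR ▸ ih hB (mem_erase.2 ⟨by omega, hx⟩)
    · exact hR ▸ ih hB hx

lemma Ldata_Rdata_insert_right_of_mem_Rdata {B A : Finset ℕ} {x : ℕ} (hx : x ∉ A)
    (hxR : x ∈ Rdata B (insert x A)) :
    Ldata B (insert x A) = Ldata B A ∧ Rdata B (insert x A) = insert x (Rdata B A) := by
  induction B using Finset.induction_on_max generalizing A with
  | empty => simp [Ldata_empty, Rdata_empty]
  | insert b B hb ih =>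
    rcases Ldata_Rdata_insert_cases (A := insert x A) hb with
      ⟨m, hm, hbm, hmin, hL, hR⟩ | ⟨hA, hL, hR⟩
    · have hmx : m ≠ x := by
        rintro rfl
        exact notMem_erase m _ (Rdata_subset _ _ (hR ▸ hxR))
      have hmA : m ∈ A := (mem_insert.1 hm).resolve_left hmx
      obtain ⟨hL', hR'⟩ := Ldata_Rdata_insert_of_partner hb hmA hbm
        (fun a ha => hmin a (mem_insert_of_mem ha))
      rw [erase_insert_of_ne hmx.symm] at hL hR
      rw [hL, hR, hL', hR']
      exact ih (fun h => hx (mem_of_mem_erase h)) (hR ▸ hxR)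
    · obtain ⟨hL', hR'⟩ := Ldata_Rdata_insert_of_forall_le hb
        (fun a ha => hA a (mem_insert_of_mem ha))
      rw [hR] at hxR
      rw [hL, hR, hL', hR', (ih hx hxR).1, (ih hx hxR).2]
      exact ⟨rfl, rfl⟩

lemma Ldata_Rdata_insert_right_of_le {B A : Finset ℕ} {x : ℕ} (hx : x ∉ A)
    (hB : ∀ b ∈ B, x ≤ b) :
    Ldata B (insert x A) = Ldata B A ∧ Rdata B (insert x A) = insert x (Rdata B A) :=
  Ldata_Rdata_insert_right_of_mem_Rdata hx (mem_Rdata_of_forall_le hB (mem_insert_self _ _))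

lemma mem_Rdata_insert_of_Ldata_eq_empty {B A : Finset ℕ} {x : ℕ} (hx : x ∉ A)
    (hA : ∀ a ∈ A, a < x) (hB : ∀ b ∈ B, b < x) (hL : Ldata B A = ∅) :
    x ∈ Rdata B (insert x A) := by
  induction B using Finset.induction_on_max generalizing A with
  | empty => rw [Rdata_empty]; exact mem_insert_self _ _
  | insert b B hb ih =>
    rcases Ldata_Rdata_insert_cases (A := A) hb with ⟨m, hm, hbm, hmin, hL', -⟩ | ⟨-, hL', -⟩
    · have hmx : m ≠ x := (hA m hm).ne
      obtain ⟨-, hR⟩ := Ldata_Rdata_insert_of_partner hb (mem_insert_of_mem hm) hbm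
        (fun a ha hba => (mem_insert.1 ha).elim (fun h => h ▸ (hA m hm).le) (hmin a · hba))
      rw [hR, erase_insert_of_ne hmx.symm]
      exact ih (fun h => hx (mem_of_mem_erase h)) (fun a ha => hA a (mem_of_mem_erase ha))
        (fun b' hb' => hB b' (mem_insert_of_mem hb')) (hL' ▸ hL)
    · exact absurd (hL' ▸ hL) (insert_ne_empty _ _)

lemma Ldata_Rdata_insert_right_of_gt {B A : Finset ℕ} {x : ℕ} (hx : x ∉ A)
    (hA : ∀ a ∈ A, a < x) (hB : ∀ b ∈ B, b < x) (hL : Ldata B A = ∅) :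
    Ldata B (insert x A) = ∅ ∧ Rdata B (insert x A) = insert x (Rdata B A) :=
  hL ▸ Ldata_Rdata_insert_right_of_mem_Rdata hx (mem_Rdata_insert_of_Ldata_eq_empty hx hA hB hL)

lemma le_of_mem_Rdata_of_mem_Ldata {B A : Finset ℕ} {x y : ℕ} (hx : x ∈ Rdata B A)
    (hy : y ∈ Ldata B A) : x ≤ y := by
  induction B using Finset.induction_on_max generalizing A with
  | empty => simp [Ldata_empty] at hy
  | insert b B hb ih =>
    rcases Ldata_Rdata_insert_cases (A := A) hb with ⟨m, -, -, -, hL, hR⟩ | ⟨hA, hL, hR⟩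
    · exact ih (hR ▸ hx) (hL ▸ hy)
    · rw [hR] at hx
      rcases mem_insert.1 (hL ▸ hy) with rfl | hy
      · exact hA x (Rdata_subset _ _ hx)
      · exact ih hx hy

lemma sub_one_notMem_of_mem_Rdata {B A : Finset ℕ} {x : ℕ} (hx0 : x ≠ 0)
    (hx : x ∈ Rdata B A) : x - 1 ∉ B := by
  induction B using Finset.induction_on_max generalizing A with
  | empty => exact notMem_empty _
  | insert b B hb ih =>
    rw [mem_insert, not_or]
    rcases Ldata_Rdata_insert_cases (A := A) hb with ⟨m, -, hbm, hmin, -, hR⟩ | ⟨hA, -, hR⟩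
    · rw [hR] at hx
      refine ⟨?_, ih hx⟩
      rintro rfl
      have hxm := mem_erase.1 (Rdata_subset _ _ hx)
      have := hmin x hxm.2 (by omega)
      omega
    · have := hA x (Rdata_subset _ _ (hR ▸ hx))
      exact ⟨by omega, ih (hR ▸ hx)⟩

lemma add_one_notMem_of_mem_Ldata {B A : Finset ℕ} {c : ℕ} (hc : c ∈ Ldata B A) : c + 1 ∉ A := by
  induction B using Finset.induction_on_max generalizing A with
  | empty => simp [Ldata_empty] at hc
  | insert b B hb ih =>
    rcases Ldata_Rdata_insert_cases (A := A) hb with ⟨m, -, hbm, -, hL, -⟩ | ⟨hA, hL, -⟩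
    · rw [hL] at hc
      have := hb c (Ldata_subset _ _ hc)
      exact fun h => ih hc (mem_erase.2 ⟨by omega, h⟩)
    · rcases mem_insert.1 (hL ▸ hc) with rfl | hc
      · exact fun h => by have := hA _ h; omega
      · exact ih hc

lemma mem_Rdata_of_lt {B A : Finset ℕ} {x y : ℕ} (hB : ∀ b ∈ B, b < x) (hx : x ∈ Rdata B A)
    (hy : y ∈ A) (hxy : x < y) : y ∈ Rdata B A := by
  induction B using Finset.induction_on_max generalizing A with
  | empty => rwa [Rdata_empty]
  | insert b B hb ih =>
    have hbx := hB b (mem_insert_self _ _)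
    have hB := fun b' hb' => hB b' (mem_insert_of_mem hb')
    rcases Ldata_Rdata_insert_cases (A := A) hb with ⟨m, -, -, hmin, -, hR⟩ | ⟨-, -, hR⟩
    · rw [hR] at hx ⊢
      have hxm := mem_erase.1 (Rdata_subset _ _ hx)
      have := hmin x hxm.2 hbx
      exact ih hB hx (mem_erase.2 ⟨by omega, hy⟩)
    · exact hR ▸ ih hB (hR ▸ hx) hy

lemma Ldata_Rdata_Ico {A : Finset ℕ} {x y : ℕ} (h : Ioc x y ⊆ A) :
    Ldata (Ico x y) A = ∅ ∧ Rdata (Ico x y) A = A \ Ioc x y := by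
  induction y generalizing A with
  | zero => simp [Ldata_empty, Rdata_empty]
  | succ y ih =>
    rcases lt_or_ge y x with hyx | hxy
    · rw [Ico_eq_empty (by omega), Ioc_eq_empty (by omega)]
      simp [Ldata_empty, Rdata_empty]
    have hy1 : y + 1 ∈ A := h (mem_Ioc.2 ⟨by omega, le_rfl⟩)
    obtain ⟨hL, hR⟩ := Ldata_Rdata_insert_of_partner (B := Ico x y) (fun b hb => (mem_Ico.1 hb).2)
      hy1 (Nat.lt_succ_self y) (fun a _ hya => hya)
    have ih := ih (A := A.erase (y + 1)) fun k hk =>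
      mem_erase.2 ⟨by have := (mem_Ioc.1 hk).2; omega, h (Ioc_subset_Ioc_right (by omega) hk)⟩
    rw [Nat.Ico_succ_right_eq_insert_Ico hxy, hL, hR, ih.1, ih.2]
    refine ⟨rfl, ?_⟩
    ext k
    by_cases hk : k ∈ A <;> simp only [mem_sdiff, mem_erase, mem_Ioc, hk, and_true, true_and,
      and_false, false_and]
    omega

lemma Ioc_subset_of_Ldata_Ico_eq_empty {A : Finset ℕ} {x y : ℕ} (hA : ∀ a ∈ A, a ≤ y)
    (h : Ldata (Ico x y) A = ∅) : Ioc x y ⊆ A := by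
  induction y generalizing A with
  | zero => simp
  | succ y ih =>
    rcases lt_or_ge y x with hyx | hxy
    · simp [Ioc_eq_empty (show ¬x < y + 1 by omega)]
    rw [Nat.Ico_succ_right_eq_insert_Ico hxy] at h
    rcases Ldata_Rdata_insert_cases (A := A) (B := Ico x y) (fun b hb => (mem_Ico.1 hb).2) with
      ⟨m, hm, hym, -, hL, -⟩ | ⟨-, hL, -⟩
    · have hm1 : m = y + 1 := le_antisymm (hA m hm) hym
      subst hm1
      have ih := ih (fun a ha => by
        have := hA a (mem_of_mem_erase ha); have := ne_of_mem_erase ha; omega) (hL ▸ h)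
      intro k hk
      rcases eq_or_ne k (y + 1) with rfl | hk'
      · exact hm
      · exact mem_of_mem_erase (ih (mem_Ioc.2 ⟨(mem_Ioc.1 hk).1, by simp at hk; omega⟩))
    · exact absurd (hL ▸ h) (insert_ne_empty _ _)

lemma Ldata_Rdata_Ico_union {B A : Finset ℕ} {x y : ℕ} (hB : ∀ b ∈ B, b < x)
    (hA : Ioc x y ⊆ A) :
    Ldata (Ico x y ∪ B) A = Ldata B (A \ Ioc x y) ∧
      Rdata (Ico x y ∪ B) A = Rdata B (A \ Ioc x y) := by
  obtain ⟨hL, hR⟩ := Ldata_Rdata_union (fun b hb => (mem_Ico.1 hb).1) hB A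
  rw [hL, hR, (Ldata_Rdata_Ico hA).1, (Ldata_Rdata_Ico hA).2, empty_union]
  exact ⟨rfl, rfl⟩

/-- The partner of a paired letter of `A` in `(x, K]` lies in `[x, K)`: had it been below `x`,
it would have taken the free letter `x` instead. -/
lemma card_paired_Ioc_le {B A : Finset ℕ} {x : ℕ} (K : ℕ) (hx : x ∈ Rdata B A) :
    ((A \ Rdata B A).filter (fun a => x < a ∧ a ≤ K)).card ≤
      (B.filter (fun b => x ≤ b ∧ b < K)).card := by
  induction B using Finset.induction_on_max generalizing A with
  | empty => simp [Rdata_empty]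
  | insert b B hb ih =>
    have hbB : b ∉ B := fun h => lt_irrefl b (hb b h)
    have hmono : (B.filter (fun b => x ≤ b ∧ b < K)).card ≤
        ((insert b B).filter (fun b => x ≤ b ∧ b < K)).card :=
      card_le_card (filter_subset_filter _ (subset_insert _ _))
    rcases Ldata_Rdata_insert_cases (A := A) hb with ⟨m, hm, hbm, hmin, -, hR⟩ | ⟨-, -, hR⟩
    · rw [hR] at hx ⊢
      have ih := ih hx
      have hxm := mem_erase.1 (Rdata_subset _ _ hx)
      have hsplit : A \ Rdata B (A.erase m) = insert m (A.erase m \ Rdata B (A.erase m)) := by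
        ext a
        have := @Rdata_subset B (A.erase m) a
        simp only [mem_sdiff, mem_insert, mem_erase] at this ⊢
        by_cases ham : a = m <;> simp_all
      rw [hsplit, filter_insert]
      split_ifs with hmK
      · have hxb : x ≤ b := not_lt.1 fun hbx => by have := hmin x hxm.2 hbx; omega
        rw [filter_insert, if_pos ⟨hxb, by omega⟩,
          card_insert_of_notMem fun h => hbB (mem_filter.1 h).1]
        exact (card_insert_le _ _).trans (Nat.add_le_add_right ih 1)
      · exact ih.trans hmono
    · rw [hR] at hx ⊢
      exact (ih hx).trans hmono

lemma filter_union_Ico_union_filter {B : Finset ℕ} {x y : ℕ} (h : Ico x y ⊆ B) :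
    B.filter (y ≤ ·) ∪ (Ico x y ∪ B.filter (· < x)) = B := by
  refine Subset.antisymm (union_subset (filter_subset _ _)
    (union_subset h (filter_subset _ _))) fun k hk => ?_
  simp only [mem_union, mem_filter, mem_Ico, hk, true_and]
  omega

/-- `Rdata (B.filter (c + 1 ≤ ·)) A` is what is left of `A` when the pairing reaches `c`. -/
lemma pairing_of_isLeast_Ldata {B A : Finset ℕ} {x c : ℕ} (hc : IsLeast (Ldata B A : Set ℕ) c)
    (hxc : x ≤ c) (hblock : Icc x c ⊆ B) :
    (∀ q ∈ Rdata (B.filter (c + 1 ≤ ·)) A, q ≤ c) ∧ Ioc x c ⊆ Rdata (B.filter (c + 1 ≤ ·)) A ∧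
      Ldata (B.filter (· < x)) (Rdata (B.filter (c + 1 ≤ ·)) A \ Ioc x c) = ∅ := by
  set Bhi := B.filter (c + 1 ≤ ·)
  set Blo := B.filter (· < x)
  set Q := Rdata Bhi A
  have hB : Bhi ∪ insert c (Ico x c ∪ Blo) = B := by
    rw [← insert_union, Ico_insert_right hxc, ← Ico_add_one_right_eq_Icc]
    exact filter_union_Ico_union_filter (Ico_add_one_right_eq_Icc x c ▸ hblock)
  have hlo : ∀ b ∈ Blo, b < x := fun b hb => (mem_filter.1 hb).2
  have hrest : ∀ b ∈ Ico x c ∪ Blo, b < c := by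
    intro b hb
    simp only [Blo, mem_union, mem_Ico, mem_filter] at hb
    omega
  have hLB : Ldata B A = Ldata Bhi A ∪ Ldata (insert c (Ico x c ∪ Blo)) Q :=
    hB ▸ (Ldata_Rdata_union (fun b hb => (mem_filter.1 hb).2) (fun b hb => (mem_insert.1 hb).elim
      (fun h => h ▸ c.lt_succ_self) fun h => (hrest b h).trans c.lt_succ_self) A).1
  have hcQ : c ∈ Ldata (insert c (Ico x c ∪ Blo)) Q := by
    rcases mem_union.1 (hLB ▸ mem_coe.1 hc.1) with h | h
    · have := (mem_filter.1 (Ldata_subset _ _ h)).2; omega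
    · exact h
  rcases Ldata_Rdata_insert_cases (A := Q) hrest with ⟨m, -, -, -, hL, -⟩ | ⟨hQ, hL, -⟩
  · have := hrest c (Ldata_subset _ _ (hL ▸ hcQ)); omega
  have hLrest : Ldata (Ico x c ∪ Blo) Q = ∅ := by
    refine eq_empty_of_forall_notMem fun u hu => ?_
    have huB : u ∈ Ldata B A := by
      rw [hLB, hL]
      exact mem_union_right _ (mem_insert_of_mem hu)
    have := hc.2 huB
    have := hrest u (Ldata_subset _ _ hu)
    omega
  obtain ⟨hL1, -⟩ := Ldata_Rdata_union (fun b hb => (mem_Ico.1 hb).1) hlo Q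
  rw [hLrest, eq_comm, union_eq_empty] at hL1
  have hIoc := Ioc_subset_of_Ldata_Ico_eq_empty hQ hL1.1
  exact ⟨hQ, hIoc, (Ldata_Rdata_Ico hIoc).2 ▸ hL1.2⟩

lemma isGreatest_Rdata_erase_insert {B A : Finset ℕ} {x c : ℕ}
    (hc : IsLeast (Ldata B A : Set ℕ) c) (hxc : x ≤ c) (hblock : Icc x c ⊆ B) (hxA : x ∉ A) :
    IsGreatest (Rdata (B.erase c) (insert x A) : Set ℕ) x := by
  obtain ⟨hQ, hIoc, hLlo⟩ := pairing_of_isLeast_Ldata hc hxc hblock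
  set Bhi := B.filter (c + 1 ≤ ·)
  set Blo := B.filter (· < x)
  set V := Rdata Bhi A \ Ioc x c
  have hB : Bhi ∪ (Ico x c ∪ Blo) = B.erase c := by
    ext k
    by_cases hk : k ∈ B
    · simp only [Bhi, Blo, mem_union, mem_filter, mem_Ico, mem_erase, hk, true_and, and_true]
      omega
    · have : ¬(x ≤ k ∧ k < c) := fun h => hk (hblock (mem_Icc.2 ⟨h.1, h.2.le⟩))
      simp [Bhi, Blo, hk, this]
  have hlo : ∀ b ∈ Blo, b < x := fun b hb => (mem_filter.1 hb).2
  have hV : ∀ v ∈ V, v < x := by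
    intro v hv
    obtain ⟨hvQ, hv⟩ := mem_sdiff.1 hv
    have := hQ v hvQ
    have : v ≠ x := fun h => hxA (h ▸ Rdata_subset _ _ hvQ)
    simp only [mem_Ioc] at hv
    omega
  have hR : Rdata (B.erase c) (insert x A) = insert x (Rdata Blo V) := by
    have hrest : ∀ b ∈ Ico x c ∪ Blo, b < c + 1 := by
      intro b hb
      simp only [Blo, mem_union, mem_Ico, mem_filter] at hb
      omega
    rw [← hB, (Ldata_Rdata_union (fun b hb => (mem_filter.1 hb).2) hrest _).2,
      (Ldata_Rdata_insert_right_of_le hxA fun b hb => by have := (mem_filter.1 hb).2; omega).2,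
      (Ldata_Rdata_Ico_union hlo (hIoc.trans (subset_insert _ _))).2,
      insert_sdiff_of_notMem _ (by simp),
      (Ldata_Rdata_insert_right_of_gt (fun h => lt_irrefl x (hV x h)) hV hlo hLlo).2]
  rw [hR, coe_insert]
  refine ⟨Set.mem_insert x _, fun v hv => ?_⟩
  rcases hv with rfl | hv
  · exact le_rfl
  · exact (hV v (Rdata_subset _ _ hv)).le

lemma Ico_subset_of_isGreatest_Rdata {B A : Finset ℕ} {a c : ℕ}
    (ha : IsGreatest (Rdata B A : Set ℕ) a) (hblock : Icc a c ⊆ A) : Ico a c ⊆ B := by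
  have hpaired : Ioc a c ⊆ (A \ Rdata B A).filter (fun m => a < m ∧ m ≤ c) := by
    intro m hm
    have hm' := mem_Ioc.1 hm
    refine mem_filter.2 ⟨mem_sdiff.2 ⟨hblock (Ioc_subset_Icc_self hm), fun h => ?_⟩, hm'⟩
    have := ha.2 h
    omega
  have hfilter : B.filter (fun b => a ≤ b ∧ b < c) = Ico a c := by
    refine eq_of_subset_of_card_le (fun b hb => mem_Ico.2 (mem_filter.1 hb).2) ?_
    calc #(Ico a c) = #(Ioc a c) := by simp
      _ ≤ _ := card_le_card hpaired
      _ ≤ _ := card_paired_Ioc_le c ha.1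
  exact hfilter ▸ filter_subset _ _

/-- `Rdata (B.filter (c ≤ ·)) A` is what is left of `A` when the pairing gets below `c`. -/
lemma pairing_of_isGreatest_Rdata {B A : Finset ℕ} {a c : ℕ}
    (ha : IsGreatest (Rdata B A : Set ℕ) a) (hac : a ≤ c) (hblock : Icc a c ⊆ A) (hcB : c ∉ B) :
    (∀ q ∈ Rdata (B.filter (c ≤ ·)) A, q ≤ c) ∧ Icc a c ⊆ Rdata (B.filter (c ≤ ·)) A ∧
      a ∈ Rdata (B.filter (· < a)) (Rdata (B.filter (c ≤ ·)) A \ Ioc a c) ∧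
      Ldata (B.filter (· < a)) (Rdata (B.filter (c ≤ ·)) A \ Ioc a c) = ∅ := by
  set Bhi := B.filter (c ≤ ·)
  set Blo := B.filter (· < a)
  set Q := Rdata Bhi A
  set V := Q \ Ioc a c
  have hhi : ∀ b ∈ Bhi, c < b := fun b hb => by
    have := (mem_filter.1 hb).2; have := ne_of_mem_of_not_mem (mem_filter.1 hb).1 hcB; omega
  have hlo : ∀ b ∈ Blo, b < a := fun b hb => (mem_filter.1 hb).2
  have hQ : Icc a c ⊆ Q := fun k hk =>
    mem_Rdata_of_forall_le (fun b hb => (mem_Icc.1 hk).2.trans (hhi b hb).le) (hblock hk)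
  have hR : Rdata B A = Rdata Blo V := by
    have hrest : ∀ b ∈ Ico a c ∪ Blo, b < c := by
      intro b hb
      simp only [Blo, mem_union, mem_Ico, mem_filter] at hb
      omega
    rw [← filter_union_Ico_union_filter (Ico_subset_of_isGreatest_Rdata ha hblock),
      (Ldata_Rdata_union (fun b hb => (mem_filter.1 hb).2) hrest _).2,
      (Ldata_Rdata_Ico_union hlo (Ioc_subset_Icc_self.trans hQ)).2]
  have haV : a ∈ Rdata Blo V := hR ▸ ha.1
  refine ⟨fun q hq => not_lt.1 fun hcq => ?_, hQ, haV, ?_⟩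
  · have hqV : q ∈ V := mem_sdiff.2 ⟨hq, by simp only [mem_Ioc]; omega⟩
    have := ha.2 (hR ▸ mem_Rdata_of_lt hlo haV hqV (by omega))
    omega
  · refine eq_empty_of_forall_notMem fun u hu => ?_
    have := le_of_mem_Rdata_of_mem_Ldata haV hu
    have := hlo u (Ldata_subset _ _ hu)
    omega

lemma isLeast_Ldata_insert_erase {B A : Finset ℕ} {a c : ℕ}
    (ha : IsGreatest (Rdata B A : Set ℕ) a) (hac : a ≤ c) (hblock : Icc a c ⊆ A) (hcB : c ∉ B) :
    IsLeast (Ldata (insert c B) (A.erase a) : Set ℕ) c := by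
  obtain ⟨hQ'c, hQ'blk, haV', hLlo⟩ := pairing_of_isGreatest_Rdata ha hac hblock hcB
  set Bhi := B.filter (c ≤ ·)
  set Blo := B.filter (· < a)
  have hhi : ∀ b ∈ Bhi, c < b := fun b hb => by
    have := (mem_filter.1 hb).2; have := ne_of_mem_of_not_mem (mem_filter.1 hb).1 hcB; omega
  have hlo : ∀ b ∈ Blo, b < a := fun b hb => (mem_filter.1 hb).2
  have haA₀ : a ∉ A.erase a := notMem_erase _ _
  have hQ' : Rdata Bhi A = insert a (Rdata Bhi (A.erase a)) := by
    conv_lhs => rw [← insert_erase (Rdata_subset _ _ (mem_coe.1 ha.1))]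
    exact (Ldata_Rdata_insert_right_of_le haA₀ fun b hb => hac.trans (hhi b hb).le).2
  set Q := Rdata Bhi (A.erase a)
  have hIoc : Ioc a c ⊆ Q := fun k hk => by
    have := hQ' ▸ hQ'blk (Ioc_subset_Icc_self hk)
    exact (mem_insert.1 this).resolve_left (mem_Ioc.1 hk).1.ne'
  have hLloV : Ldata Blo (Q \ Ioc a c) = ∅ := by
    rw [hQ', insert_sdiff_of_notMem _ (by simp)] at haV' hLlo
    rw [← hLlo, (Ldata_Rdata_insert_right_of_mem_Rdata
      (fun h => haA₀ (Rdata_subset _ _ (mem_sdiff.1 h).1)) haV').1]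
  have hrest : ∀ b ∈ Ico a c ∪ Blo, b < c := by
    intro b hb
    simp only [Blo, mem_union, mem_Ico, mem_filter] at hb
    omega
  have hL : Ldata (insert c B) (A.erase a) =
      insert c (Ldata Bhi (A.erase a) ∪ Ldata Blo (Q \ Ioc a c)) := by
    rw [← filter_union_Ico_union_filter (Ico_subset_of_isGreatest_Rdata ha hblock), ← union_insert,
      (Ldata_Rdata_union (y := c + 1) (fun b hb => hhi b hb) (fun b hb => (mem_insert.1 hb).elim
        (fun h => h ▸ c.lt_succ_self) fun h => (hrest b h).trans c.lt_succ_self) _).1,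
      (Ldata_Rdata_insert_of_forall_le hrest fun q hq => hQ'c q (hQ' ▸ mem_insert_of_mem hq)).1,
      (Ldata_Rdata_Ico_union hlo hIoc).1, union_insert]
  rw [hL, hLloV, union_empty, coe_insert]
  refine ⟨Set.mem_insert c _, fun u hu => ?_⟩
  rcases hu with rfl | hu
  exacts [le_rfl, (hhi u (Ldata_subset _ _ hu)).le]

lemma sInf_lt_and_Icc_sub_sInf_subset {B : Finset ℕ} {c : ℕ} (hB : 0 ∉ B) (hc : c ∈ B) :
    sInf {j | c - j - 1 ∉ B} < c ∧ Icc (c - sInf {j | c - j - 1 ∉ B}) c ⊆ B := by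
  have hc0 : c ≠ 0 := fun h => hB (h ▸ hc)
  refine ⟨(Nat.sInf_le (show c - 1 ∈ {j | c - j - 1 ∉ B} by
    simpa [show c - (c - 1) - 1 = 0 by omega])).trans_lt (by omega), fun k hk => ?_⟩
  have hk := mem_Icc.1 hk
  rcases eq_or_ne k c with rfl | hkc
  · exact hc
  · have := not_not.1 (Nat.notMem_of_lt_sInf (show c - k - 1 < sInf {j | c - j - 1 ∉ B} by omega))
    rwa [show c - (c - k - 1) - 1 = k by omega] at this

lemma Icc_add_sInf_subset {A : Finset ℕ} {a : ℕ} (ha : a ∈ A) :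
    Icc a (a + sInf {j | a + j + 1 ∉ A}) ⊆ A := by
  intro k hk
  have hk := mem_Icc.1 hk
  rcases eq_or_ne k a with rfl | hka
  · exact ha
  · have := not_not.1 (Nat.notMem_of_lt_sInf (show k - a - 1 < sInf {j | a + j + 1 ∉ A} by omega))
    rwa [show a + (k - a - 1) + 1 = k by omega] at this

lemma fC_eq_some_of_eC_eq_some {B A B' A' : Finset ℕ} (hB : 0 ∉ B)
    (h : eC B A = some (B', A')) (hcard : #B + #A = #B' + #A') : fC B' A' = some (B, A) := by
  rw [eC] at h
  split_ifs at h with hL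
  obtain ⟨rfl, rfl⟩ := Prod.mk.inj (Option.some.inj h)
  set c := (Ldata B A).min' hL
  set t := sInf {j | c - j - 1 ∉ B}
  have hc : IsLeast (Ldata B A : Set ℕ) c := isLeast_min' _ _
  have hcB : c ∈ B := Ldata_subset _ _ (min'_mem _ _)
  obtain ⟨htc, hblock⟩ := sInf_lt_and_Icc_sub_sInf_subset hB hcB
  have hxA : c - t ∉ A := fun hx => by
    rw [card_erase_of_mem hcB, insert_eq_of_mem hx] at hcard
    have := card_pos.2 ⟨c, hcB⟩
    omega
  have hx := isGreatest_Rdata_erase_insert hc (Nat.sub_le c t) hblock hxA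
  have hIoc : Ioc (c - t) c ⊆ A :=
    (pairing_of_isLeast_Ldata hc (Nat.sub_le c t) hblock).2.1.trans (Rdata_subset _ _)
  have hc1 : c + 1 ∉ A := add_one_notMem_of_mem_Ldata hc.1
  have hs : sInf {j | c - t + j + 1 ∉ insert (c - t) A} = t := by
    refine IsLeast.csInf_eq ⟨?_, fun j hj => not_lt.1 fun hjt => hj ?_⟩
    · simp only [Set.mem_ofPred_eq, mem_insert, not_or]
      exact ⟨by omega, by rwa [show c - t + t + 1 = c + 1 by omega]⟩
    · exact mem_insert_of_mem (hIoc (mem_Ioc.2 ⟨by omega, by omega⟩))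
  have hR : (Rdata (B.erase c) (insert (c - t) A)).Nonempty := ⟨c - t, hx.1⟩
  rw [fC, dif_pos hR, (isGreatest_max' _ _).unique hx, hs,
    show c - t + t = c by omega, insert_erase hcB, erase_insert hxA]

lemma eC_eq_some_of_fC_eq_some {B A B' A' : Finset ℕ} (hA : 0 ∉ A)
    (h : fC B A = some (B', A')) (hcard : #B + #A = #B' + #A') : eC B' A' = some (B, A) := by
  rw [fC] at h
  split_ifs at h with hR
  obtain ⟨rfl, rfl⟩ := Prod.mk.inj (Option.some.inj h)
  set a := (Rdata B A).max' hR
  set s := sInf {j | a + j + 1 ∉ A}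
  have ha : IsGreatest (Rdata B A : Set ℕ) a := isGreatest_max' _ _
  have haA : a ∈ A := Rdata_subset _ _ (max'_mem _ _)
  have ha0 : a ≠ 0 := fun h => hA (h ▸ haA)
  have hblock := Icc_add_sInf_subset haA
  have hcB : a + s ∉ B := fun hc => by
    rw [card_erase_of_mem haA, insert_eq_of_mem hc] at hcard
    have := card_pos.2 ⟨a, haA⟩
    omega
  have hc := isLeast_Ldata_insert_erase ha (Nat.le_add_right a s) hblock hcB
  have hIco : Ico a (a + s) ⊆ B := Ico_subset_of_isGreatest_Rdata ha hblock
  have hpred : a - 1 ∉ B := sub_one_notMem_of_mem_Rdata ha0 ha.1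
  have ht : sInf {j | a + s - j - 1 ∉ insert (a + s) B} = s := by
    refine IsLeast.csInf_eq ⟨?_, fun j hj => not_lt.1 fun hjs => hj ?_⟩
    · simp only [Set.mem_ofPred_eq, mem_insert, not_or]
      exact ⟨by omega, by rwa [show a + s - s - 1 = a - 1 by omega]⟩
    · exact mem_insert_of_mem (hIco (mem_Ico.2 ⟨by omega, by omega⟩))
  have hL : (Ldata (insert (a + s) B) (A.erase a)).Nonempty := ⟨a + s, hc.1⟩
  rw [eC, dif_pos hL, (isLeast_min' _ _).unique hc, ht,
    show a + s - s = a by omega, erase_insert hcB, insert_erase haA]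

lemma add_eq_add_of_sum_eq {ι M : Type*} [Fintype ι] [DecidableEq ι] [AddCancelCommMonoid M]
    {f g : ι → M} {j k : ι} (hjk : j ≠ k) (hsum : ∑ m, f m = ∑ m, g m)
    (hfg : ∀ m, m ≠ j → m ≠ k → f m = g m) : f j + f k = g j + g k := by
  have hsplit (h : ι → M) : ∑ m, h m = h j + h k + ∑ m ∈ (univ.erase j).erase k, h m := by
    rw [add_assoc, add_sum_erase _ _ (mem_erase.2 ⟨hjk.symm, mem_univ k⟩),
      add_sum_erase _ _ (mem_univ j)]
  rw [hsplit f, hsplit g, sum_congr rfl fun m hm =>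
    hfg m (ne_of_mem_erase (mem_of_mem_erase hm)) (ne_of_mem_erase hm)] at hsum
  exact add_right_cancel hsum

lemma update_update_eq_iff {ι α : Type*} [DecidableEq ι] {f g : ι → α} {j k : ι} (hjk : j ≠ k)
    {x y : α} : Function.update (Function.update f j x) k y = g ↔
      x = g j ∧ y = g k ∧ ∀ m, m ≠ j → m ≠ k → f m = g m := by
  rw [Function.update_eq_iff]
  constructor
  · rintro ⟨hy, h⟩
    exact ⟨by simpa using h j hjk, hy, fun m hmj hmk => by simpa [hmj] using h m hmk⟩
  · rintro ⟨hx, hy, h⟩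
    refine ⟨hy, fun m hmk => ?_⟩
    rcases eq_or_ne m j with rfl | hmj
    · simpa using hx
    · simpa [hmj] using h m hmj hmk

lemma eOp_eq_some_iff {ℓ i : ℕ} (hi : 1 ≤ i) (hiℓ : i < ℓ) {c c' : Fin ℓ → Finset ℕ} :
    eOp i c = some c' ↔
      eC (c ⟨i, hiℓ⟩) (c ⟨i - 1, by omega⟩) = some (c' ⟨i, hiℓ⟩, c' ⟨i - 1, by omega⟩) ∧
        ∀ m, m ≠ ⟨i, hiℓ⟩ → m ≠ ⟨i - 1, by omega⟩ → c m = c' m := by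
  rw [eOp, dif_pos ⟨hi, hiℓ⟩]
  rcases eC (c ⟨i, hiℓ⟩) (c ⟨i - 1, by omega⟩) with _ | ⟨B', A'⟩
  · simp
  · simp only [Option.some.injEq, Prod.mk.injEq]
    rw [update_update_eq_iff (by simp [Fin.ext_iff]; omega), and_assoc]

lemma fOp_eq_some_iff {ℓ i : ℕ} (hi : 1 ≤ i) (hiℓ : i < ℓ) {c c' : Fin ℓ → Finset ℕ} :
    fOp i c = some c' ↔
      fC (c ⟨i, hiℓ⟩) (c ⟨i - 1, by omega⟩) = some (c' ⟨i, hiℓ⟩, c' ⟨i - 1, by omega⟩) ∧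
        ∀ m, m ≠ ⟨i, hiℓ⟩ → m ≠ ⟨i - 1, by omega⟩ → c m = c' m := by
  rw [fOp, dif_pos ⟨hi, hiℓ⟩]
  rcases fC (c ⟨i, hiℓ⟩) (c ⟨i - 1, by omega⟩) with _ | ⟨B', A'⟩
  · simp
  · simp only [Option.some.injEq, Prod.mk.injEq]
    rw [update_update_eq_iff (by simp [Fin.ext_iff]; omega), and_assoc]

/-- For decreasing factorizations `b, b' ∈ 𝒲_w^ℓ` and `1 ≤ i < ℓ`:
`ẽᵢ(b) = b'` if and only if `f̃ᵢ(b') = b`. -/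
theorem eOp_eq_iff_fOp_eq (n ℓ : ℕ) (w : Equiv.Perm (Fin n)) (c c' : Fin ℓ → Finset ℕ)
    (i : ℕ) (hi : 1 ≤ i) (hiℓ : i < ℓ)
    (hc : IsDecFactorizationC n ℓ w c) (hc' : IsDecFactorizationC n ℓ w c') :
    eOp i c = some c' ↔ fOp i c' = some c := by
  have hjk : (⟨i, hiℓ⟩ : Fin ℓ) ≠ ⟨i - 1, by omega⟩ := by simp [Fin.ext_iff]; omega
  have hsum : ∑ m, #(c m) = ∑ m, #(c' m) := hc.2.2.symm.trans hc'.2.2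
  have hzero {d : Fin ℓ → Finset ℕ} (hd : IsDecFactorizationC n ℓ w d) (m : Fin ℓ) : 0 ∉ d m :=
    fun h => by simpa using (hd.1 m 0 h).1
  rw [eOp_eq_some_iff hi hiℓ, fOp_eq_some_iff hi hiℓ]
  constructor
  · rintro ⟨he, hagree⟩
    refine ⟨fC_eq_some_of_eC_eq_some (hzero hc _) he ?_, fun m hj hk => (hagree m hj hk).symm⟩
    exact add_eq_add_of_sum_eq hjk hsum fun m hj hk => congrArg card (hagree m hj hk)
  · rintro ⟨hf, hagree⟩
    refine ⟨eC_eq_some_of_fC_eq_some (hzero hc' _) hf ?_, fun m hj hk => (hagree m hj hk).symm⟩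
    exact add_eq_add_of_sum_eq hjk hsum.symm fun m hj hk => congrArg card (hagree m hj hk)

end
end

section
/- Let w ∈ S_n, k = ℓ(w), and let 𝔴, 𝔳 ∈ Red(w) differ by a single Coxeter–Knuth relation in positions p, p+1, p+2, with 𝔴 containing the left-hand side of the relation and 𝔳 the right-hand side. Let b_𝔴, b_𝔳 ∈ W_w^k be the corresponding singleton-factor decreasing factorizations (the letter in position p of the word placed in factor number k+1−p). Then f̃_i f̃_{i+1} ẽ_i ẽ_{i+1} (b_𝔴) = b_𝔳, where i = k − p − 1 is the index for which the three letters occupy factors i+2, i+1, i. -/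
open scoped Classical

noncomputable section

/-- A Coxeter–Knuth exchange on a triple of letters: the left-hand side `t` and right-hand
side `t'` of one of the relations `(a+1) a (a+1) ~ a (a+1) a`, `b a c ~ b c a`,
`c a b ~ a c b` with `a < b < c`. -/
def CKExch : ℕ × ℕ × ℕ → ℕ × ℕ × ℕ → Prop := fun t t' =>
  (∃ a, t = (a + 1, a, a + 1) ∧ t' = (a, a + 1, a)) ∨
  (∃ a b c, a < b ∧ b < c ∧ t = (b, a, c) ∧ t' = (b, c, a)) ∨
  (∃ a b c, a < b ∧ b < c ∧ t = (c, a, b) ∧ t' = (a, c, b))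

/-- Two words differ by a single Coxeter–Knuth relation on three consecutive letters. -/
def CKStep (u v : List ℕ) : Prop :=
  ∃ (l₁ l₂ : List ℕ) (t t' : ℕ × ℕ × ℕ),
    (CKExch t t' ∨ CKExch t' t) ∧
    u = l₁ ++ [t.1, t.2.1, t.2.2] ++ l₂ ∧
    v = l₁ ++ [t'.1, t'.2.1, t'.2.2] ++ l₂

-- ===== auxiliary lemmas =====

lemma sort_pair_aux {x y : ℕ} (h : x < y) :
    ({x, y} : Finset ℕ).sort (· ≤ ·) = [x, y] := by
  have := Finset.sort_insert (r := (· ≤ ·)) (a := x) (s := {y}) (by simp [h.le]) (by simp [h.ne])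
  rw [this, Finset.sort_singleton]

lemma pairAux_single_aux {a b : ℕ} (h : a < b) : pairAux [b] {a} = ({b}, {a}) := by
  have : ¬ (({a} : Finset ℕ).filter (fun x => b < x)).Nonempty := by
    simp [Finset.filter_singleton]; omega
  unfold pairAux
  rw [dif_neg this]
  simp [pairAux]

lemma sInf_zero_of_mem {P : ℕ → Prop} (h : P 0) : sInf {j | P j} = 0 :=
  Nat.sInf_eq_zero.2 (Or.inl h)

lemma eC_single {a b : ℕ} (hab : a < b) : eC {b} {a} = some (∅, insert b {a}) := by
  have hL : Ldata {b} {a} = {b} := by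
    rw [Ldata, Finset.sort_singleton]
    simpa using congrArg Prod.fst (pairAux_single_aux hab)
  rw [eC, dif_pos (by rw [hL]; exact ⟨b, by simp⟩)]
  have hm : (Ldata {b} {a}).min' (by rw [hL]; exact ⟨b, by simp⟩) = b := by
    simp [hL]
  rw [hm]
  have hs : sInf {j | b - j - 1 ∉ ({b} : Finset ℕ)} = 0 := by
    apply sInf_zero_of_mem; simp; omega
  rw [hs]
  simp

lemma eC_case1 {a : ℕ} (ha : 1 ≤ a) :
    eC (insert (a+1) {a}) {a+1} = some ({a}, insert a {a+1}) := by
  have hset : (insert (a+1) {a} : Finset ℕ) = {a, a+1} := Finset.pair_comm _ _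
  have hsort : ((insert (a+1) {a} : Finset ℕ).sort (· ≤ ·)).reverse = [a+1, a] := by
    rw [hset, sort_pair_aux (by omega)]; rfl
  have hpa : pairAux [a+1, a] {a+1} = ({a+1}, ∅) := by
    have h1 : ¬ (({a+1} : Finset ℕ).filter (fun x => a + 1 < x)).Nonempty := by
      simp [Finset.filter_singleton]
    have h2 : (({a+1} : Finset ℕ).filter (fun x => a < x)).Nonempty := by
      simp [Finset.filter_singleton]
    unfold pairAux
    rw [dif_neg h1]
    unfold pairAux
    rw [dif_pos h2]
    have h3 : (({a+1} : Finset ℕ).filter (fun x => a < x)).min' h2 = a + 1 := by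
      simp [Finset.filter_singleton]
    rw [h3]
    simp [pairAux]
  have hL : Ldata (insert (a+1) {a}) {a+1} = {a+1} := by
    rw [Ldata, hsort]; exact congrArg Prod.fst hpa
  have hne : (Ldata (insert (a+1) {a}) {a+1}).Nonempty := by
    rw [hL]; exact ⟨a+1, by simp⟩
  rw [eC, dif_pos hne]
  have hm : (Ldata (insert (a+1) {a}) {a+1}).min' hne = a + 1 := by simp [hL]
  rw [hm]
  have hs : sInf {j | a + 1 - j - 1 ∉ (insert (a+1) {a} : Finset ℕ)} = 1 := by
    have h0 : (0 : ℕ) ∉ {j | a + 1 - j - 1 ∉ (insert (a+1) {a} : Finset ℕ)} := by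
      simp
    have h1 : (1 : ℕ) ∈ {j | a + 1 - j - 1 ∉ (insert (a+1) {a} : Finset ℕ)} := by
      simp; omega
    have hle := Nat.sInf_le h1
    have hmem := Nat.sInf_mem ⟨1, h1⟩
    rcases Nat.le_one_iff_eq_zero_or_eq_one.mp hle with h' | h'
    · rw [h'] at hmem; exact absurd hmem h0
    · exact h'
  rw [hs]
  have he : (insert (a+1) {a} : Finset ℕ).erase (a+1) = {a} := by
    ext x
    simp only [Finset.mem_erase, Finset.mem_insert, Finset.mem_singleton]
    omega
  rw [he]
  norm_num

lemma eC_case2 {a b c : ℕ} (ha : 1 ≤ a) (hab : a < b) (hbc : b < c) :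
    eC (insert b {a}) {c} = some ({b}, insert a {c}) := by
  have hsort : ((insert b {a} : Finset ℕ).sort (· ≤ ·)).reverse = [b, a] := by
    rw [show (insert b {a} : Finset ℕ) = {a, b} from Finset.pair_comm _ _,
      sort_pair_aux hab]; rfl
  have hpa : pairAux [b, a] {c} = ({a}, ∅) := by
    have h1 : (({c} : Finset ℕ).filter (fun x => b < x)).Nonempty := by
      simp [Finset.filter_singleton, hbc]
    unfold pairAux
    rw [dif_pos h1]
    have h3 : (({c} : Finset ℕ).filter (fun x => b < x)).min' h1 = c := by
      simp [Finset.filter_singleton, hbc]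
    rw [h3]
    simp [pairAux]
  have hL : Ldata (insert b {a}) {c} = {a} := by
    rw [Ldata, hsort]; exact congrArg Prod.fst hpa
  have hne : (Ldata (insert b {a}) {c}).Nonempty := by rw [hL]; exact ⟨a, by simp⟩
  rw [eC, dif_pos hne]
  have hm : (Ldata (insert b {a}) {c}).min' hne = a := by simp [hL]
  rw [hm]
  have hs : sInf {j | a - j - 1 ∉ (insert b {a} : Finset ℕ)} = 0 := by
    apply sInf_zero_of_mem; simp; omega
  rw [hs]
  have he : (insert b {a} : Finset ℕ).erase a = {b} := by
    ext x
    simp only [Finset.mem_erase, Finset.mem_insert, Finset.mem_singleton]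
    omega
  rw [he]
  norm_num

lemma eC_case3 {a b c : ℕ} (hab : a < b) (hbc : b < c) :
    eC (insert c {a}) {b} = some ({a}, insert c {b}) := by
  have hsort : ((insert c {a} : Finset ℕ).sort (· ≤ ·)).reverse = [c, a] := by
    rw [show (insert c {a} : Finset ℕ) = {a, c} from Finset.pair_comm _ _,
      sort_pair_aux (by omega)]; rfl
  have hpa : pairAux [c, a] {b} = ({c}, ∅) := by
    have h1 : ¬ (({b} : Finset ℕ).filter (fun x => c < x)).Nonempty := by
      simp [Finset.filter_singleton]; omega
    have h2 : (({b} : Finset ℕ).filter (fun x => a < x)).Nonempty := by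
      simp [Finset.filter_singleton, hab]
    unfold pairAux
    rw [dif_neg h1]
    unfold pairAux
    rw [dif_pos h2]
    have h3 : (({b} : Finset ℕ).filter (fun x => a < x)).min' h2 = b := by
      simp [Finset.filter_singleton, hab]
    rw [h3]
    simp [pairAux]
  have hL : Ldata (insert c {a}) {b} = {c} := by
    rw [Ldata, hsort]; exact congrArg Prod.fst hpa
  have hne : (Ldata (insert c {a}) {b}).Nonempty := by rw [hL]; exact ⟨c, by simp⟩
  rw [eC, dif_pos hne]
  have hm : (Ldata (insert c {a}) {b}).min' hne = c := by simp [hL]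
  rw [hm]
  have hs : sInf {j | c - j - 1 ∉ (insert c {a} : Finset ℕ)} = 0 := by
    apply sInf_zero_of_mem; simp; omega
  rw [hs]
  have he : (insert c {a} : Finset ℕ).erase c = {a} := by
    ext x
    simp only [Finset.mem_erase, Finset.mem_insert, Finset.mem_singleton]
    omega
  rw [he]
  norm_num

lemma fC_empty {A : Finset ℕ} (h : A.Nonempty) :
    fC ∅ A = some ({A.max' h}, A.erase (A.max' h)) := by
  have hR : Rdata ∅ A = A := by
    rw [Rdata]; simp [pairAux]
  have hne : (Rdata ∅ A).Nonempty := by rw [hR]; exact h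
  rw [fC, dif_pos hne]
  have hm : (Rdata ∅ A).max' hne = A.max' h := by
    congr 1
  have hs : sInf {j | A.max' h + j + 1 ∉ A} = 0 := by
    apply sInf_zero_of_mem
    intro hmem
    have := Finset.le_max' A _ hmem
    omega
  simp only [hm, hs]
  simp

lemma fC_single (x : ℕ) : fC ∅ {x} = some ({x}, ∅) := by
  rw [fC_empty (⟨x, by simp⟩ : ({x} : Finset ℕ).Nonempty), Finset.max'_singleton,
    Finset.erase_singleton]

lemma fC_pair {x y : ℕ} (h : x < y) : fC ∅ (insert x {y}) = some ({y}, {x}) := by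
  have hne : (insert x {y} : Finset ℕ).Nonempty := ⟨x, by simp⟩
  have hmax : (insert x {y} : Finset ℕ).max' hne = y := by
    apply le_antisymm
    · apply Finset.max'_le; intro z hz; simp at hz; omega
    · apply Finset.le_max'; simp
  have he : (insert x {y} : Finset ℕ).erase y = {x} := by
    ext z
    simp only [Finset.mem_erase, Finset.mem_insert, Finset.mem_singleton]
    omega
  rw [fC_empty hne, hmax, he]

lemma fC_pair' {x y : ℕ} (h : y < x) : fC ∅ (insert x {y}) = some ({x}, {y}) := by
  rw [show (insert x {y} : Finset ℕ) = insert y {x} from Finset.pair_comm _ _]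
  exact fC_pair h

lemma eOp_eq {ℓ : ℕ} (i : ℕ) (c : Fin ℓ → Finset ℕ) (h1 : 1 ≤ i) (h2 : i < ℓ)
    (B' A' : Finset ℕ)
    (hE : eC (c ⟨i, h2⟩) (c ⟨i - 1, by omega⟩) = some (B', A')) :
    eOp i c = some (Function.update (Function.update c ⟨i, h2⟩ B') ⟨i - 1, by omega⟩ A') := by
  unfold eOp
  rw [dif_pos ⟨h1, h2⟩]
  rw [hE]

lemma fOp_eq {ℓ : ℕ} (i : ℕ) (c : Fin ℓ → Finset ℕ) (h1 : 1 ≤ i) (h2 : i < ℓ)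
    (B' A' : Finset ℕ)
    (hE : fC (c ⟨i, h2⟩) (c ⟨i - 1, by omega⟩) = some (B', A')) :
    fOp i c = some (Function.update (Function.update c ⟨i, h2⟩ B') ⟨i - 1, by omega⟩ A') := by
  unfold fOp
  rw [dif_pos ⟨h1, h2⟩]
  rw [hE]

lemma eOp_succ_eq {ℓ : ℕ} (i : ℕ) (c : Fin ℓ → Finset ℕ) (h2 : i + 1 < ℓ)
    (B' A' : Finset ℕ)
    (hE : eC (c ⟨i + 1, h2⟩) (c ⟨i, by omega⟩) = some (B', A')) :
    eOp (i+1) c = some (Function.update (Function.update c ⟨i + 1, h2⟩ B') ⟨i, by omega⟩ A') :=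
  eOp_eq (i+1) c (by omega) h2 B' A' hE

lemma fOp_succ_eq {ℓ : ℕ} (i : ℕ) (c : Fin ℓ → Finset ℕ) (h2 : i + 1 < ℓ)
    (B' A' : Finset ℕ)
    (hE : fC (c ⟨i + 1, h2⟩) (c ⟨i, by omega⟩) = some (B', A')) :
    fOp (i+1) c = some (Function.update (Function.update c ⟨i + 1, h2⟩ B') ⟨i, by omega⟩ A') :=
  fOp_eq (i+1) c (by omega) h2 B' A' hE

lemma upd_eval {k : ℕ} (f : Fin k → Finset ℕ) (a b : ℕ) (ha : a < k) (hb : b < k)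
    (v : Finset ℕ) :
    Function.update f ⟨a, ha⟩ v ⟨b, hb⟩ = if b = a then v else f ⟨b, hb⟩ := by
  rcases eq_or_ne b a with h | h
  · subst h; simp
  · rw [if_neg h, Function.update_of_ne (Fin.ne_of_val_ne h)]

lemma chain {k : ℕ} (c d : Fin k → Finset ℕ) (i : ℕ) (h1 : 1 ≤ i) (h2 : i + 1 < k)
    (P Q R P1 Q1 Q2 R1 P2 Q3 Q4 R2 : Finset ℕ)
    (hP : c ⟨i+1, h2⟩ = P) (hQ : c ⟨i, by omega⟩ = Q) (hR : c ⟨i-1, by omega⟩ = R)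
    (he1 : eC P Q = some (P1, Q1))
    (he2 : eC Q1 R = some (Q2, R1))
    (hf1 : fC P1 Q2 = some (P2, Q3))
    (hf2 : fC Q3 R1 = some (Q4, R2))
    (hd : ∀ j : Fin k, d j = if j.1 = i+1 then P2 else if j.1 = i then Q4
      else if j.1 = i-1 then R2 else c j) :
    ((((eOp (i+1) c).bind (eOp i)).bind (fOp (i+1))).bind (fOp i)) = some d := by
  have hI : i < k := by omega
  have hI0 : i - 1 < k := by omega
  rw [eOp_succ_eq i c h2 P1 Q1 (by rw [hP, hQ]; exact he1)]
  rw [Option.bind_some]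
  rw [eOp_eq i _ h1 hI Q2 R1 (by
    simp only [upd_eval, if_true]
    simp only [if_neg (by omega : ¬ i - 1 = i), if_neg (by omega : ¬ i - 1 = i + 1)]
    rw [hR]
    exact he2)]
  rw [Option.bind_some]
  rw [fOp_succ_eq i _ h2 P2 Q3 (by
    simp only [upd_eval, if_true]
    simp only [if_neg (by omega : ¬ i + 1 = i - 1), if_neg (by omega : ¬ i + 1 = i),
      if_neg (by omega : ¬ i = i - 1)]
    exact hf1)]
  rw [Option.bind_some]
  rw [fOp_eq i _ h1 hI Q4 R2 (by
    simp only [upd_eval, if_true]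
    simp only [if_neg (by omega : ¬ i - 1 = i), if_neg (by omega : ¬ i - 1 = i + 1)]
    exact hf2)]
  congr 1
  funext j
  obtain ⟨jv, hj⟩ := j
  rw [hd ⟨jv, hj⟩]
  simp only [upd_eval]
  split_ifs <;> first | rfl | omega

lemma getD_three (l₁ l₂ : List ℕ) (x y z : ℕ) (r : ℕ) (hr : r < 3) :
    (l₁ ++ [x, y, z] ++ l₂).getD (l₁.length + r) 0 = [x, y, z].getD r 0 := by
  rw [List.append_assoc,
    List.getD_append_right _ _ _ _ (Nat.le_add_right _ _), Nat.add_sub_cancel_left,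
    List.getD_append _ _ _ _ (by simp; omega)]

lemma getD_outside (l₁ l₂ : List ℕ) (x y z x' y' z' : ℕ) (idx : ℕ)
    (h : idx < l₁.length ∨ l₁.length + 3 ≤ idx) :
    (l₁ ++ [x, y, z] ++ l₂).getD idx 0 = (l₁ ++ [x', y', z'] ++ l₂).getD idx 0 := by
  rcases h with h | h
  · rw [List.append_assoc, List.append_assoc, List.getD_append _ _ _ _ h,
      List.getD_append _ _ _ _ h]
  · have h3 : ([x, y, z] : List ℕ).length = 3 := rfl
    have h3' : ([x', y', z'] : List ℕ).length = 3 := rfl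
    rw [List.append_assoc, List.append_assoc,
      List.getD_append_right _ _ _ _ (by omega : l₁.length ≤ idx),
      List.getD_append_right _ _ _ _ (by omega : l₁.length ≤ idx),
      List.getD_append_right _ _ _ _ (by rw [h3]; omega),
      List.getD_append_right _ _ _ _ (by rw [h3']; omega), h3, h3']


/-- If reduced words `u, v` of `w` (with `k = ℓ(w)`) differ by a single Coxeter–Knuth
relation in positions `p, p+1, p+2` (so `p = l₁.length + 1`), with `u` containing the
left-hand side and `v` the right-hand side, and `b_u, b_v ∈ 𝒲_w^k` are the corresponding
singleton-factor decreasing factorizations, then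
`f̃ᵢ f̃_{i+1} ẽᵢ ẽ_{i+1} (b_u) = b_v` where `i = k - p - 1`. -/
theorem ck_relation_crystal (n : ℕ) (w : Equiv.Perm (Fin n)) (l₁ l₂ : List ℕ)
    (t t' : ℕ × ℕ × ℕ) (hCK : CKExch t t') (u v : List ℕ)
    (hu : u = l₁ ++ [t.1, t.2.1, t.2.2] ++ l₂)
    (hv : v = l₁ ++ [t'.1, t'.2.1, t'.2.2] ++ l₂)
    (hru : IsReducedWord n w u) (hrv : IsReducedWord n w v)
    (bu bv : Fin (len n w) → Finset ℕ)
    (hbu : ∀ j : Fin (len n w), bu j = {u.getD (len n w - 1 - j.1) 0})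
    (hbv : ∀ j : Fin (len n w), bv j = {v.getD (len n w - 1 - j.1) 0})
    (i : ℕ) (hi : i = len n w - (l₁.length + 1) - 1) :
    ((((eOp (i + 1) bu).bind (eOp i)).bind (fOp (i + 1))).bind (fOp i)) = some bv := by
  have hb2 := (hru.1 t.2.1 (by rw [hu]; simp)).1
  have hulen : u.length = len n w := hru.2.2
  have hklen : len n w = l₁.length + 3 + l₂.length := by
    rw [← hulen, hu]
    simp only [List.length_append, List.length_cons, List.length_nil]
    try omega
  have hi1 : 1 ≤ i := by omega
  have hi2 : i + 1 < len n w := by omega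
  have hP : bu ⟨i+1, hi2⟩ = {t.1} := by
    rw [hbu]
    congr 1
    show u.getD (len n w - 1 - (i+1)) 0 = t.1
    rw [show len n w - 1 - (i+1) = l₁.length + 0 from by omega, hu,
      getD_three _ _ _ _ _ _ (by omega)]; rfl
  have hQ : bu ⟨i, by omega⟩ = {t.2.1} := by
    rw [hbu]
    congr 1
    show u.getD (len n w - 1 - i) 0 = t.2.1
    rw [show len n w - 1 - i = l₁.length + 1 from by omega, hu,
      getD_three _ _ _ _ _ _ (by omega)]; rfl
  have hR : bu ⟨i-1, by omega⟩ = {t.2.2} := by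
    rw [hbu]
    congr 1
    show u.getD (len n w - 1 - (i-1)) 0 = t.2.2
    rw [show len n w - 1 - (i-1) = l₁.length + 2 from by omega, hu,
      getD_three _ _ _ _ _ _ (by omega)]; rfl
  have hout : ∀ j : Fin (len n w), ¬ (j : ℕ) = i+1 → ¬ (j : ℕ) = i → ¬ (j : ℕ) = i-1 →
      bv j = bu j := by
    intro j h2' h1' h0'
    rw [hbu, hbv]
    congr 1
    rw [hu, hv]
    exact (getD_outside l₁ l₂ t.1 t.2.1 t.2.2 t'.1 t'.2.1 t'.2.2 _
      (by have := j.isLt; omega)).symm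
  rcases hCK with ⟨a, ht, ht'⟩ | ⟨a, b, c, hab, hbc, ht, ht'⟩ | ⟨a, b, c, hab, hbc, ht, ht'⟩
  · subst ht; subst ht'
    refine chain bu bv i hi1 hi2 {a+1} {a} {a+1} ∅ (insert (a+1) {a}) {a} (insert a {a+1})
      {a} ∅ {a+1} {a} hP hQ hR (eC_single (by omega)) (eC_case1 hb2) (fC_single a)
      (fC_pair (by omega)) ?_
    intro j
    by_cases h2' : (j : ℕ) = i+1
    · rw [if_pos h2', hbv]
      congr 1
      rw [show len n w - 1 - (j : ℕ) = l₁.length + 0 from by omega, hv,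
        getD_three _ _ _ _ _ _ (by omega)]; rfl
    · rw [if_neg h2']
      by_cases h1' : (j : ℕ) = i
      · rw [if_pos h1', hbv]
        congr 1
        rw [show len n w - 1 - (j : ℕ) = l₁.length + 1 from by omega, hv,
          getD_three _ _ _ _ _ _ (by omega)]; rfl
      · rw [if_neg h1']
        by_cases h0' : (j : ℕ) = i-1
        · rw [if_pos h0', hbv]
          congr 1
          rw [show len n w - 1 - (j : ℕ) = l₁.length + 2 from by omega, hv,
            getD_three _ _ _ _ _ _ (by omega)]; rfl
        · rw [if_neg h0']
          exact hout j h2' h1' h0'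
  · subst ht; subst ht'
    refine chain bu bv i hi1 hi2 {b} {a} {c} ∅ (insert b {a}) {b} (insert a {c})
      {b} ∅ {c} {a} hP hQ hR (eC_single hab) (eC_case2 hb2 hab hbc) (fC_single b)
      (fC_pair (by omega)) ?_
    intro j
    by_cases h2' : (j : ℕ) = i+1
    · rw [if_pos h2', hbv]
      congr 1
      rw [show len n w - 1 - (j : ℕ) = l₁.length + 0 from by omega, hv,
        getD_three _ _ _ _ _ _ (by omega)]; rfl
    · rw [if_neg h2']
      by_cases h1' : (j : ℕ) = i
      · rw [if_pos h1', hbv]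
        congr 1
        rw [show len n w - 1 - (j : ℕ) = l₁.length + 1 from by omega, hv,
          getD_three _ _ _ _ _ _ (by omega)]; rfl
      · rw [if_neg h1']
        by_cases h0' : (j : ℕ) = i-1
        · rw [if_pos h0', hbv]
          congr 1
          rw [show len n w - 1 - (j : ℕ) = l₁.length + 2 from by omega, hv,
            getD_three _ _ _ _ _ _ (by omega)]; rfl
        · rw [if_neg h0']
          exact hout j h2' h1' h0'
  · subst ht; subst ht'
    refine chain bu bv i hi1 hi2 {c} {a} {b} ∅ (insert c {a}) {a} (insert c {b})
      {a} ∅ {c} {b} hP hQ hR (eC_single (by omega)) (eC_case3 hab hbc) (fC_single a)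
      (fC_pair' hbc) ?_
    intro j
    by_cases h2' : (j : ℕ) = i+1
    · rw [if_pos h2', hbv]
      congr 1
      rw [show len n w - 1 - (j : ℕ) = l₁.length + 0 from by omega, hv,
        getD_three _ _ _ _ _ _ (by omega)]; rfl
    · rw [if_neg h2']
      by_cases h1' : (j : ℕ) = i
      · rw [if_pos h1', hbv]
        congr 1
        rw [show len n w - 1 - (j : ℕ) = l₁.length + 1 from by omega, hv,
          getD_three _ _ _ _ _ _ (by omega)]; rfl
      · rw [if_neg h1']
        by_cases h0' : (j : ℕ) = i-1
        · rw [if_pos h0', hbv]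
          congr 1
          rw [show len n w - 1 - (j : ℕ) = l₁.length + 2 from by omega, hv,
            getD_three _ _ _ _ _ _ (by omega)]; rfl
        · rw [if_neg h0']
          exact hout j h2' h1' h0'

end
end

section
/- Let (W,S) be a finite Coxeter system with longest element w_0. For any two reduced words 𝔴, 𝔳 ∈ Red(w_0) there exists a finite sequence of indices i^{(1)}, …, i^{(m)} ∈ I such that e_{i^{(m)}} ∘ ⋯ ∘ e_{i^{(1)}}(𝔴) = 𝔳; that is, the transition graph of the exchange chain on Red(w_0) is strongly connected. -/
/-!
Every `s i` is a left descent of `w₀`. Given a reduced word `p ++ q` of `w₀` such that `i :: p`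
is still reduced, the exchange condition writes `s i * w₀` as the product of `p ++ q` with one
letter deleted, and that letter lies in `q` because `s i * π p` has length `p.length + 1`. So an
exchange move turns `p ++ q` into `i :: p ++ q'`, and starting from `u` one builds `v` from its last
letter backwards.

The exchange condition comes from Tits' sign representation `s i ↦ ((t, ε) ↦ (s i * t * s i,
ε + [t = s i]))` on `W × ZMod 2`: it shows that the parity of the number of occurrences of a
reflection `t` in the right inversion sequence of a word depends only on the product of the word.
If `s i * π ω` is shorter than `π ω`, comparing `ω` with `i :: β` for a reduced word `β` of
`s i * π ω` shows that `(π ω)⁻¹ * s i * π ω` occurs an odd number of times in that sequence.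
-/

open scoped Classical

noncomputable section

/-- The exchange move on reduced words of `w₀`: `v` is obtained from `u` by prepending a
letter `i` and deleting the (unique) letter whose removal leaves a reduced word of `w₀`. -/
def ExchMove {B W : Type*} [Group W] {M : CoxeterMatrix B} (cs : CoxeterSystem M W)
    (w₀ : W) (u v : List B) : Prop :=
  ∃ (i : B) (j : ℕ), j < u.length ∧ v = i :: u.eraseIdx j ∧
    cs.wordProd v = w₀ ∧ v.length = cs.length w₀

namespace CoxeterSystem

open List

variable {B W : Type*} [Group W] {M : CoxeterMatrix B} (cs : CoxeterSystem M W)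

local prefix:100 "s" => cs.simple
local prefix:100 "π" => cs.wordProd
local prefix:100 "ℓ" => cs.length
local prefix:100 "ris " => cs.rightInvSeq
local prefix:100 "lis " => cs.leftInvSeq

theorem prod_map_alternatingWord_two_mul {G : Type*} [Monoid G] (f : B → G) (i i' : B) (k : ℕ) :
    ((alternatingWord i i' (2 * k)).map f).prod = (f i * f i') ^ k := by
  induction k with
  | zero => simp [alternatingWord]
  | succ k ih =>
    rw [Nat.mul_succ, alternatingWord_succ', alternatingWord_succ',
      if_neg (Nat.not_even_two_mul_add_one k), if_pos (even_two_mul k)]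
    simp [ih, pow_succ', mul_assoc]

theorem reverse_alternatingWord_two_mul (i i' : B) (k : ℕ) :
    (alternatingWord i i' (2 * k)).reverse = alternatingWord i' i (2 * k) := by
  induction k with
  | zero => simp [alternatingWord]
  | succ k ih =>
    rw [Nat.mul_succ, alternatingWord_succ', alternatingWord_succ',
      if_neg (Nat.not_even_two_mul_add_one k), if_pos (even_two_mul k), alternatingWord_succ,
      alternatingWord_succ, ← ih]
    simp

theorem exists_leftInvSeq_alternatingWord_eq_append_self (i i' : B) :
    ∃ L : List W, lis (alternatingWord i i' (2 * M i i')) = L ++ L := by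
  have hperiod : ∀ k, π (alternatingWord i' i (2 * (M i i' + k) + 1))
      = π (alternatingWord i' i (2 * k + 1)) := by
    intro k
    simp only [prod_alternatingWord_eq_mul_pow, Nat.not_even_two_mul_add_one, if_false,
      Nat.mul_add_div two_pos, pow_add, simple_mul_simple_pow', one_mul]
  refine ⟨(lis (alternatingWord i i' (2 * M i i'))).take (M i i'), ext_getElem (by simp; omega) ?_⟩
  intro k hk _
  have hk2m : k < 2 * M i i' := by simpa using hk
  rw [getElem_leftInvSeq_alternatingWord cs i i' _ k hk2m]
  by_cases hkm : k < M i i'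
  · rw [getElem_append_left (by simp; omega), getElem_take,
      getElem_leftInvSeq_alternatingWord cs i i' _ k hk2m]
  · obtain ⟨k, rfl⟩ := Nat.exists_eq_add_of_le (not_lt.mp hkm)
    rw [getElem_append_right (by simp), getElem_take]
    simp only [length_take, length_leftInvSeq, length_alternatingWord,
      show M i i' + k - min (M i i') (2 * M i i') = k by omega]
    rw [getElem_leftInvSeq_alternatingWord cs i i' _ k (by omega), hperiod]

theorem simple_mul_mul_simple_eq_simple_iff (i : B) (t : W) : s i * t * s i = s i ↔ t = s i := by
  constructor
  · intro h
    simpa [mul_assoc] using congrArg (fun x => s i * x * s i) h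
  · rintro rfl
    simp [simple_mul_simple_self]

def reflectionSignPerm (i : B) : Equiv.Perm (W × ZMod 2) :=
  Function.Involutive.toPerm (fun p => (s i * p.1 * s i, p.2 + if p.1 = s i then 1 else 0)) <| by
    rintro ⟨t, ε⟩
    simp only [simple_mul_mul_simple_eq_simple_iff, Prod.mk.injEq]
    constructor
    · simp [mul_assoc]
    · split_ifs <;> grind

theorem reflectionSignPerm_apply (i : B) (t : W) (ε : ZMod 2) :
    cs.reflectionSignPerm i (t, ε) = (s i * t * s i, ε + if t = s i then 1 else 0) :=
  rfl

theorem prod_map_reflectionSignPerm_apply (ω : List B) (t : W) (ε : ZMod 2) :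
    (ω.map cs.reflectionSignPerm).prod (t, ε) = (π ω * t * (π ω)⁻¹, ε + (ris ω).count t) := by
  induction ω with
  | nil => simp
  | cons i ω ih =>
    have hconj : π ω * t * (π ω)⁻¹ = s i ↔ (π ω)⁻¹ * s i * π ω = t := by
      constructor <;> intro h <;> rw [← h] <;> group
    simp only [map_cons, prod_cons, Equiv.Perm.mul_apply, ih, reflectionSignPerm_apply, hconj,
      wordProd_cons, rightInvSeq, count_cons, beq_iff_eq]
    refine Prod.ext ?_ ?_
    · simp [mul_assoc]
    · push_cast
      ring

theorem isLiftable_reflectionSignPerm : M.IsLiftable cs.reflectionSignPerm := by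
  intro i i'
  rw [← prod_map_alternatingWord_two_mul]
  ext ⟨t, ε⟩ : 1
  obtain ⟨L, hL⟩ := cs.exists_leftInvSeq_alternatingWord_eq_append_self i' i
  have hword : π (alternatingWord i i' (2 * M i i')) = 1 := by
    rw [wordProd, prod_map_alternatingWord_two_mul, simple_mul_simple_pow]
  have hris : ris (alternatingWord i i' (2 * M i i')) = (L ++ L).reverse := by
    rw [← hL, ← rightInvSeq_reverse, reverse_alternatingWord_two_mul, M.symmetric]
  rw [prod_map_reflectionSignPerm_apply, hword, hris, count_reverse, count_append]
  simp [CharTwo.add_self_eq_zero]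

def reflectionSignRep : W →* Equiv.Perm (W × ZMod 2) :=
  cs.lift ⟨cs.reflectionSignPerm, cs.isLiftable_reflectionSignPerm⟩

theorem reflectionSignRep_wordProd (ω : List B) :
    cs.reflectionSignRep (π ω) = (ω.map cs.reflectionSignPerm).prod := by
  rw [wordProd, map_list_prod, map_map]
  congr 2
  ext i : 1
  exact cs.lift_apply_simple _ i

theorem cast_count_rightInvSeq_eq_of_wordProd_eq {ω ω' : List B} (h : π ω = π ω') (t : W) :
    ((ris ω).count t : ZMod 2) = (ris ω').count t := by
  have := congrArg (fun g => (cs.reflectionSignRep g (t, 0)).2) h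
  simpa [reflectionSignRep_wordProd, prod_map_reflectionSignPerm_apply] using this

theorem exists_eraseIdx_of_isLeftDescent {ω : List B} {i : B}
    (hi : cs.IsLeftDescent (π ω) i) : ∃ j < ω.length, s i * π ω = π (ω.eraseIdx j) := by
  obtain ⟨β, hβ, hβω⟩ := cs.exists_isReduced (s i * π ω)
  have hiβ : π (i :: β) = π ω := by rw [wordProd_cons, ← hβω, simple_mul_simple_cancel_left]
  have hβt : π β * ((π ω)⁻¹ * s i * π ω) = π ω := by simp [← hβω, mul_assoc]
  have hnotMem : (π ω)⁻¹ * s i * π ω ∉ ris β := fun ht => by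
    have := (cs.isRightInversion_of_mem_rightInvSeq hβ ht).2
    rw [hβt, ← hβω] at this
    exact lt_asymm this hi
  have hmem : (π ω)⁻¹ * s i * π ω ∈ ris ω := by
    have hcount := cs.cast_count_rightInvSeq_eq_of_wordProd_eq hiβ ((π ω)⁻¹ * s i * π ω)
    rw [rightInvSeq, count_cons, count_eq_zero.mpr hnotMem, if_pos (by
      simp [← hβω, mul_assoc])] at hcount
    by_contra h
    simp [count_eq_zero.mpr h] at hcount
  obtain ⟨j, hj, hjt⟩ := mem_iff_getElem.mp hmem
  refine ⟨j, by simpa using hj, ?_⟩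
  rw [← wordProd_mul_getD_rightInvSeq, getD_eq_getElem _ _ hj, hjt]
  group

theorem isLeftDescent_of_forall_length_le {w₀ : W} (hw₀ : ∀ w : W, ℓ w ≤ ℓ w₀) (i : B) :
    cs.IsLeftDescent w₀ i :=
  lt_of_le_of_ne (hw₀ _) (cs.length_simple_mul_ne w₀ i)

theorem exists_exchMove_cons_append {w₀ : W} (hw₀ : ∀ w : W, ℓ w ≤ ℓ w₀) {p q : List B}
    (hpq : π (p ++ q) = w₀ ∧ (p ++ q).length = ℓ w₀) {i : B} (hip : cs.IsReduced (i :: p)) :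
    ∃ q', ExchMove cs w₀ (p ++ q) (i :: (p ++ q')) := by
  obtain ⟨j, hj, hji⟩ := cs.exists_eraseIdx_of_isLeftDescent
    (hpq.1 ▸ cs.isLeftDescent_of_forall_length_le hw₀ i)
  have hpj : p.length ≤ j := by
    by_contra! hjp
    rw [eraseIdx_append_of_lt_length hjp, wordProd_append, wordProd_append, ← mul_assoc,
      mul_left_inj, ← wordProd_cons] at hji
    have := cs.length_wordProd_le (p.eraseIdx j)
    rw [← hji, hip.eq, length_eraseIdx_of_lt hjp, length_cons] at this
    omega
  have hsplit := eraseIdx_append_of_length_le hpj q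
  refine ⟨q.eraseIdx (j - p.length), i, j, hj, hsplit ▸ rfl, ?_, ?_⟩
  · rw [wordProd_cons, ← hsplit, ← hji, hpq.1, simple_mul_simple_cancel_left]
  · rw [length_cons, ← hsplit, length_eraseIdx_add_one hj, hpq.2]

theorem reflTransGen_exchMove_append {w₀ : W} (hw₀ : ∀ w : W, ℓ w ≤ ℓ w₀) (ρ σ u : List B)
    (hv : π (ρ ++ σ) = w₀ ∧ (ρ ++ σ).length = ℓ w₀) (hu : π u = w₀ ∧ u.length = ℓ w₀)
    (hσu : σ <+: u) : Relation.ReflTransGen (ExchMove cs w₀) u (ρ ++ σ) := by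
  induction ρ using List.reverseRecOn generalizing σ u with
  | nil =>
    rw [nil_append, hσu.eq_of_length (hv.2.trans hu.2.symm)]
  | append_singleton ρ i ih =>
    obtain ⟨q, rfl⟩ := hσu
    rw [append_assoc, singleton_append] at hv ⊢
    have hv_red : cs.IsReduced (ρ ++ i :: σ) := by rw [IsReduced, hv.1, hv.2]
    have hiσ : cs.IsReduced (i :: σ) := by simpa using hv_red.drop ρ.length
    obtain ⟨q', hmove⟩ := cs.exists_exchMove_cons_append hw₀ hu hiσ
    have ⟨_, _, _, _, hπ, hlen⟩ := hmove
    exact .head hmove (ih (i :: σ) _ hv ⟨hπ, hlen⟩ ⟨q', rfl⟩)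

end CoxeterSystem

theorem exchange_graph_strongly_connected_general {B W : Type*} [Group W]
    {M : CoxeterMatrix B} (cs : CoxeterSystem M W)
    (w₀ : W) (hw₀ : ∀ w : W, cs.length w ≤ cs.length w₀)
    (u v : List B)
    (hu : cs.wordProd u = w₀ ∧ u.length = cs.length w₀)
    (hv : cs.wordProd v = w₀ ∧ v.length = cs.length w₀) :
    Relation.ReflTransGen (ExchMove cs w₀) u v := by
  simpa using cs.reflTransGen_exchMove_append hw₀ v [] u (by simpa using hv) hu List.nil_prefix

/-- The transition graph of the exchange chain on `Red(w₀)` is strongly connected: any two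
reduced words of the longest element `w₀` of a finite Coxeter system are connected by a
finite sequence of exchange moves. -/
theorem exchange_graph_strongly_connected {B W : Type*} [Group W] [Finite W]
    {M : CoxeterMatrix B} (cs : CoxeterSystem M W)
    (w₀ : W) (hw₀ : ∀ w : W, cs.length w ≤ cs.length w₀)
    (u v : List B)
    (hu : cs.wordProd u = w₀ ∧ u.length = cs.length w₀)
    (hv : cs.wordProd v = w₀ ∧ v.length = cs.length w₀) :
    Relation.ReflTransGen (ExchMove cs w₀) u v :=
  exchange_graph_strongly_connected_general cs w₀ hw₀ u v hu hv
end
end
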